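/- arXiv:2103.09892 — 6 statements merged into one kernel-verified Lean document; each statement's English description precedes it below -/
import Mathlib

section
/- Let G be a finite group with a DRAD difference set D and subgroup H of order h (so |G| = h²). Then every nontrivial coset Hg ≠ H satisfies |D ∩ Hg| = h/2. -/
/-!
Write `A(x) = |D ∩ Hx|`. Since `D` avoids `H`, double counting gives `∑ₓ A(x) = |D| h`, and since
`A` is constant on cosets, `∑ₓ A(x)² = h ∑_{d ∈ D} A(d) = h (|D| + λ (h - 1))`, the last step by the
difference property restricted to quotients in `H`. From `|G| = h + 2|D|` and
`|D| (|D| - 1) = λ (|G| - 1)` one gets `|G| - 1 ∣ h² - 1`, which together with `h ∣ |G|` and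
`|G| ≥ 2h` forces `|G| = h²`; hence `|D| = h (h - 1) / 2` and `λ = h (h - 2) / 4`. For these values
`∑_{x ∉ H} (2 A(x) - h)² = 0`, so `A(x) = h / 2` off `H`.
-/

open Finset

/-- `D` is a `(v, |D|, l)`-difference set in `G`: every nonidentity element of `G`
occurs exactly `l` times as a quotient `x * y⁻¹` with `x, y ∈ D`. -/
def IsDiffSet {G : Type*} [Group G] [DecidableEq G] (D : Finset G) (l : ℕ) : Prop :=
  ∀ g : G, g ≠ 1 → ((D ×ˢ D).filter (fun q => q.1 * q.2⁻¹ = g)).card = l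

/-- `D` is a DRAD difference set in `G` with subgroup `H`:
`D ∩ D⁻¹ = ∅`, `G \ (D ∪ D⁻¹) = H`, and `D` is a difference set with parameter `l`. -/
def IsDRAD {G : Type*} [Group G] [DecidableEq G] (D : Finset G) (H : Subgroup G) (l : ℕ) : Prop :=
  (∀ g ∈ D, g⁻¹ ∉ D) ∧ (∀ g : G, g ∈ H ↔ (g ∉ D ∧ g⁻¹ ∉ D)) ∧ IsDiffSet D l

open scoped Pointwise

theorem Int.eq_of_mul_sub_one_dvd_sq_sub_one {h m : ℤ} (hh : 2 ≤ h) (hm : 2 ≤ m)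
    (hdvd : h * m - 1 ∣ h ^ 2 - 1) : m = h := by
  have hdiff : h * m - 1 ∣ h - m := by
    rw [show h - m = m * (h ^ 2 - 1) - h * (h * m - 1) by ring]
    exact dvd_sub (hdvd.mul_left m) (dvd_mul_left _ h)
  have hlt : |h - m| < h * m - 1 := abs_lt.2 ⟨by nlinarith, by nlinarith⟩
  linarith [Int.eq_zero_of_abs_lt_dvd hdiff hlt]

/-- The parameters of a DRAD difference set with `|G| = h * m`, `|D| = k` and `λ = l`. -/
theorem drad_params {h m k l : ℤ} (hh : 2 ≤ h) (hm : 2 ≤ m) (hv : h * m = h + 2 * k)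
    (hkl : k * k = k + l * (h * m - 1)) : 2 * k = h * (h - 1) ∧ 4 * l = h * (h - 2) := by
  have hmh : m = h := by
    refine Int.eq_of_mul_sub_one_dvd_sq_sub_one hh hm ⟨4 * l - h * m + 2 * h + 1, ?_⟩
    linear_combination 4 * hkl + (h * m - h + 2 * k - 2) * hv
  subst hmh
  refine ⟨by linear_combination -hv, ?_⟩
  have hpos : (m - 1) * (m + 1) ≠ 0 := mul_ne_zero (by omega) (by omega)
  refine mul_left_cancel₀ hpos ?_
  linear_combination -4 * hkl - (2 * k + m ^ 2 - m - 2) * hv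

section CosetCount

variable {G : Type*} [Group G] (H : Subgroup G)
  [DecidablePred (· ∈ H)] (D : Finset G)

/-- `cosetCount H D x = |D ∩ H x|`. -/
def cosetCount (x : G) : ℕ := #{d ∈ D | d * x⁻¹ ∈ H}

variable {H D}

theorem cosetCount_eq_of_mul_inv_mem {x y : G} (hxy : y * x⁻¹ ∈ H) :
    cosetCount H D y = cosetCount H D x := by
  unfold cosetCount
  congr 1
  refine filter_congr fun d _ => ⟨fun hd => ?_, fun hd => ?_⟩
  · simpa [mul_assoc] using H.mul_mem hd hxy
  · simpa [mul_assoc] using H.mul_mem hd (H.inv_mem hxy)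

variable [Fintype G]

theorem card_filter_mul_inv_mem (d : G) : #{x | d * x⁻¹ ∈ H} = Nat.card H := by
  rw [Nat.card_eq_fintype_card, Fintype.card_subtype]
  refine card_nbij' (fun x => d * x⁻¹) (fun y => y⁻¹ * d) ?_ ?_ ?_ ?_ <;> intro x hx <;>
    simp_all [mul_assoc]

theorem sum_cosetCount : ∑ x, cosetCount H D x = #D * Nat.card H := by
  simp only [cosetCount, card_filter]
  rw [sum_comm, ← sum_const_nat fun d _ => card_filter_mul_inv_mem d]
  simp only [card_filter]

theorem sum_cosetCount_sq :
    ∑ x, cosetCount H D x ^ 2 = Nat.card H * ∑ d ∈ D, cosetCount H D d := by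
  have hsq (x : G) :
      cosetCount H D x ^ 2 = ∑ d ∈ D, if d * x⁻¹ ∈ H then cosetCount H D d else 0 := by
    rw [← sum_filter, sum_congr rfl fun d hd => cosetCount_eq_of_mul_inv_mem (mem_filter.1 hd).2,
      sum_const, smul_eq_mul, sq]
    rfl
  simp only [hsq]
  rw [sum_comm, mul_sum]
  refine sum_congr rfl fun d _ => ?_
  rw [← sum_filter, sum_const, smul_eq_mul, card_filter_mul_inv_mem]

end CosetCount

namespace IsDiffSet

variable {G : Type*} [Group G] [DecidableEq G] {D : Finset G} {l : ℕ}

theorem card_filter_mul_inv_mem (hD : IsDiffSet D l) {T : Finset G} (hT : 1 ∈ T) :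
    #{q ∈ D ×ˢ D | q.1 * q.2⁻¹ ∈ T} = #D + l * (#T - 1) := by
  have hdiag : #{q ∈ D ×ˢ D | q.1 * q.2⁻¹ = 1} = #D := by
    simp only [mul_inv_eq_one, ← diag_eq_filter, diag_card]
  rw [← sum_card_fiberwise_eq_card_filter, ← add_sum_erase _ _ hT, hdiag,
    sum_congr rfl fun g hg => hD g (ne_of_mem_erase hg), sum_const, smul_eq_mul,
    card_erase_of_mem hT, mul_comm]

theorem card_mul_card [Fintype G] (hD : IsDiffSet D l) :
    #D * #D = #D + l * (Fintype.card G - 1) := by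
  simpa using hD.card_filter_mul_inv_mem (mem_univ 1)

theorem sum_cosetCount {H : Subgroup G} [Fintype G] [DecidablePred (· ∈ H)]
    (hD : IsDiffSet D l) : ∑ d ∈ D, cosetCount H D d = #D + l * (Nat.card H - 1) := by
  have hH : #{x | x ∈ H} = Nat.card H := by
    rw [Nat.card_eq_fintype_card, Fintype.card_subtype]
  rw [← hH, ← hD.card_filter_mul_inv_mem (by simp), card_filter,
    sum_product_right]
  simp only [cosetCount, card_filter, mem_filter, mem_univ, true_and]

end IsDiffSet

namespace IsDRAD

variable {G : Type*} [Group G] [DecidableEq G] {H : Subgroup G} {D : Finset G} {l : ℕ}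

theorem notMem_of_mem (hD : IsDRAD D H l) {d : G} (hd : d ∈ D) : d ∉ H :=
  fun hdH => ((hD.2.1 d).1 hdH).1 hd

variable [DecidablePred (· ∈ H)]

theorem cosetCount_eq_zero (hD : IsDRAD D H l) {x : G} (hx : x ∈ H) : cosetCount H D x = 0 :=
  card_eq_zero.2 <| filter_eq_empty_iff.2 fun d hd hdx =>
    hD.notMem_of_mem hd (by simpa using H.mul_mem hdx hx)

variable [Fintype G]

theorem card_filter_notMem (hD : IsDRAD D H l) : #{x | x ∉ H} = 2 * #D := by
  have hcompl : ({x | x ∉ H} : Finset G) = D ∪ D⁻¹ := by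
    ext x
    simp only [mem_filter, mem_univ, true_and, mem_union, mem_inv', hD.2.1 x]
    tauto
  have hdisj : Disjoint D D⁻¹ := disjoint_left.2 fun d hd hd' => hD.1 d hd (mem_inv'.1 hd')
  rw [hcompl, card_union_of_disjoint hdisj, card_inv, two_mul]

theorem params (hD : IsDRAD D H l) (hbot : H ≠ ⊥) (htop : H ≠ ⊤) :
    2 * (#D : ℤ) = Nat.card H * (Nat.card H - 1) ∧
      4 * (l : ℤ) = Nat.card H * (Nat.card H - 2) := by
  have hv : Fintype.card G = Nat.card H * H.index := by
    rw [Subgroup.card_mul_index, Nat.card_eq_fintype_card]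
  have hsplit : Fintype.card G = Nat.card H + 2 * #D := by
    rw [← hD.card_filter_notMem, ← card_univ, Nat.card_eq_fintype_card, Fintype.card_subtype,
      card_filter_add_card_filter_not]
  have hkl := hD.2.2.card_mul_card
  have hv1 : 1 ≤ Fintype.card G := Fintype.card_pos
  refine drad_params (m := H.index) ?_ ?_ ?_ ?_
  · exact_mod_cast (Subgroup.one_lt_card_iff_ne_bot H).2 hbot
  · exact_mod_cast Subgroup.one_lt_index_of_ne_top htop
  · exact_mod_cast hv.symm.trans hsplit
  · rw [hv] at hkl hv1
    have hkl' : ((#D * #D : ℕ) : ℤ) = ((#D + l * (Nat.card H * H.index - 1) : ℕ) : ℤ) :=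
      congrArg _ hkl
    push_cast [Nat.cast_sub hv1] at hkl'
    exact hkl'

theorem sum_sq_two_mul_cosetCount_sub (hD : IsDRAD D H l) (hbot : H ≠ ⊥) (htop : H ≠ ⊤) :
    ∑ x ∈ {x | x ∉ H}, (2 * (cosetCount H D x : ℤ) - Nat.card H) ^ 2 = 0 := by
  obtain ⟨hk, hl⟩ := hD.params hbot htop
  have hoff (f : ℕ → ℕ) (hf : f 0 = 0) :
      ∑ x ∈ {x | x ∉ H}, f (cosetCount H D x) = ∑ x, f (cosetCount H D x) :=
    sum_filter_of_ne fun x _ hfx hx => hfx (by rw [hD.cosetCount_eq_zero hx, hf])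
  have hsum : ∑ x ∈ {x | x ∉ H}, (cosetCount H D x : ℤ) = #D * Nat.card H := by
    exact_mod_cast (hoff id rfl).trans sum_cosetCount
  have hsum_sq : ∑ x ∈ {x | x ∉ H}, (cosetCount H D x : ℤ) ^ 2 =
      Nat.card H * (#D + l * (Nat.card H - 1)) := by
    have := (hoff (· ^ 2) rfl).trans <| sum_cosetCount_sq.trans <|
      congrArg (Nat.card H * ·) hD.2.2.sum_cosetCount
    have hH1 : 1 ≤ Nat.card H := Nat.card_pos
    exact_mod_cast this
  have hcard : (#({x | x ∉ H} : Finset G) : ℤ) = 2 * #D := by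
    exact_mod_cast hD.card_filter_notMem
  simp only [sub_sq, sum_add_distrib, sum_sub_distrib, ← mul_sum, ← sum_mul, sum_const,
    nsmul_eq_mul, mul_pow, hsum, hsum_sq, hcard]
  linear_combination (2 * (Nat.card H : ℤ) - Nat.card H ^ 2) * hk +
    Nat.card H * (Nat.card H - 1) * hl

end IsDRAD

theorem stmt2_general {G : Type*} [Group G] [Fintype G] [DecidableEq G]
    (H : Subgroup G) (hH : H ≠ ⊥)
    (D : Finset G) (l h : ℕ) (hh : h = Nat.card H)
    (hD : IsDRAD D H l) [DecidablePred (· ∈ H)] :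
    ∀ g : G, g ∉ H → (D.filter (fun d => d * g⁻¹ ∈ H)).card = h / 2 := by
  intro g hg
  have htop : H ≠ ⊤ := fun htop => hg (htop ▸ Subgroup.mem_top g)
  have hsq := (sum_eq_zero_iff_of_nonneg fun x _ => sq_nonneg _).1
    (hD.sum_sq_two_mul_cosetCount_sub hH htop) g (by simpa using hg)
  have htwice : 2 * cosetCount H D g = h := by
    rw [hh]
    exact_mod_cast sub_eq_zero.1 (pow_eq_zero_iff two_ne_zero |>.1 hsq)
  change cosetCount H D g = h / 2
  omega

theorem stmt2 {G : Type*} [Group G] [Fintype G] [DecidableEq G]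
    (H : Subgroup G) [H.Normal] (hH : H ≠ ⊥)
    (D : Finset G) (l h : ℕ) (hh : h = Nat.card H)
    (hD : IsDRAD D H l) [DecidablePred (· ∈ H)] :
    ∀ g : G, g ∉ H → (D.filter (fun d => d * g⁻¹ ∈ H)).card = h / 2 :=
  stmt2_general H hH D l h hh hD
end

section
/- Let p be an odd prime and G = ⟨x,y,z | x^p = y^p = z⁴ = 1, xy = yx, z⁻¹xz = y⁻¹, z⁻¹yz = x⟩. Then the subgroup of G generated by all involutions has index 2 in G; specifically every element z²x^a y^b (0 ≤ a,b < p) is an involution and these generate ⟨x, y, z²⟩. -/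
theorem stmt6 (p : ℕ) (hp : p.Prime) (hodd : Odd p)
    {G : Type*} [Group G] [Fintype G] (x y z : G)
    (hgen : Subgroup.closure ({x, y, z} : Set G) = ⊤)
    (hx : orderOf x = p) (hy : orderOf y = p) (hz : orderOf z = 4)
    (hxy : x * y = y * x)
    (hzx : z⁻¹ * x * z = y⁻¹) (hzy : z⁻¹ * y * z = x)
    (hcard : Fintype.card G = 4 * p ^ 2) :
    (∀ a b : ℕ, a < p → b < p → orderOf (z ^ 2 * x ^ a * y ^ b) = 2) ∧
      Subgroup.closure {g : G | ∃ a b : ℕ, a < p ∧ b < p ∧ g = z ^ 2 * x ^ a * y ^ b} =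
        Subgroup.closure ({x, y, z ^ 2} : Set G) ∧
      (Subgroup.closure {g : G | orderOf g = 2}).index = 2 := by
  have hc : Commute x y := hxy
  have hp1 : 1 < p := hp.one_lt
  have hxp : x ^ p = 1 := by rw [← hx]; exact pow_orderOf_eq_one x
  have hyp : y ^ p = 1 := by rw [← hy]; exact pow_orderOf_eq_one y
  have hz4 : z ^ (4 : ℕ) = 1 := by rw [← hz]; exact pow_orderOf_eq_one z
  have hzx' : z * x * z⁻¹ = y := by
    calc z * x * z⁻¹ = z * (z⁻¹ * y * z) * z⁻¹ := by rw [hzy]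
    _ = y := by group
  have hzy' : z * y * z⁻¹ = x⁻¹ := by
    have h : y = z⁻¹ * x⁻¹ * z := by
      rw [← inv_inv y, ← hzx]; group
    rw [h]; group
  set N := Subgroup.closure ({x, y} : Set G) with hNdef
  have hxN : x ∈ N := Subgroup.subset_closure (by simp)
  have hyN : y ∈ N := Subgroup.subset_closure (by simp)
  have hconj1 : ∀ n ∈ N, z⁻¹ * n * z ∈ N := by
    intro n hn
    rw [hNdef] at hn
    induction hn using Subgroup.closure_induction with
    | mem g hg =>
      simp only [Set.mem_insert_iff, Set.mem_singleton_iff] at hg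
      rcases hg with rfl | rfl
      · rw [hzx]; exact inv_mem hyN
      · rw [hzy]; exact hxN
    | one => simpa using N.one_mem
    | mul a b ha hb iha ihb =>
      have h : z⁻¹ * (a * b) * z = (z⁻¹ * a * z) * (z⁻¹ * b * z) := by group
      rw [h]; exact mul_mem iha ihb
    | inv a ha iha =>
      have h : z⁻¹ * a⁻¹ * z = (z⁻¹ * a * z)⁻¹ := by group
      rw [h]; exact inv_mem iha
  have hconj2 : ∀ n ∈ N, z * n * z⁻¹ ∈ N := by
    intro n hn
    rw [hNdef] at hn
    induction hn using Subgroup.closure_induction with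
    | mem g hg =>
      simp only [Set.mem_insert_iff, Set.mem_singleton_iff] at hg
      rcases hg with rfl | rfl
      · rw [hzx']; exact hyN
      · rw [hzy']; exact inv_mem hxN
    | one => simpa using N.one_mem
    | mul a b ha hb iha ihb =>
      have h : z * (a * b) * z⁻¹ = (z * a * z⁻¹) * (z * b * z⁻¹) := by group
      rw [h]; exact mul_mem iha ihb
    | inv a ha iha =>
      have h : z * a⁻¹ * z⁻¹ = (z * a * z⁻¹)⁻¹ := by group
      rw [h]; exact inv_mem iha
  have hN : N.Normal := by
    let T : Subgroup G :=
      { carrier := {g : G | (∀ n ∈ N, g * n * g⁻¹ ∈ N) ∧ (∀ n ∈ N, g⁻¹ * n * g ∈ N)}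
        one_mem' := ⟨fun n hn => by simpa using hn, fun n hn => by simpa using hn⟩
        mul_mem' := by
          rintro a b ⟨ha1, ha2⟩ ⟨hb1, hb2⟩
          constructor
          · intro n hn
            have h : a * b * n * (a * b)⁻¹ = a * (b * n * b⁻¹) * a⁻¹ := by group
            rw [h]; exact ha1 _ (hb1 n hn)
          · intro n hn
            have h : (a * b)⁻¹ * n * (a * b) = b⁻¹ * (a⁻¹ * n * a) * b := by group
            rw [h]; exact hb2 _ (ha2 n hn)
        inv_mem' := by
          rintro a ⟨ha1, ha2⟩
          exact ⟨fun n hn => by simpa using ha2 n hn, fun n hn => by simpa using ha1 n hn⟩ }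
    have hT : ∀ g : G, g ∈ T := by
      intro g
      have hg : g ∈ Subgroup.closure ({x, y, z} : Set G) := by rw [hgen]; trivial
      refine (Subgroup.closure_le T).mpr ?_ hg
      rintro w hw
      simp only [Set.mem_insert_iff, Set.mem_singleton_iff] at hw
      rcases hw with h | h | h <;> rw [h]
      · exact ⟨fun n hn => mul_mem (mul_mem hxN hn) (inv_mem hxN),
          fun n hn => mul_mem (mul_mem (inv_mem hxN) hn) hxN⟩
      · exact ⟨fun n hn => mul_mem (mul_mem hyN hn) (inv_mem hyN),
          fun n hn => mul_mem (mul_mem (inv_mem hyN) hn) hyN⟩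
      · exact ⟨fun n hn => hconj2 n hn, fun n hn => hconj1 n hn⟩
    exact ⟨fun n hn g => (hT g).1 n hn⟩
  have hdecomp : ∀ g : G, ∃ n ∈ N, ∃ c : ℤ, g = n * z ^ c := by
    let P : Subgroup G :=
      { carrier := {g : G | ∃ n ∈ N, ∃ c : ℤ, g = n * z ^ c}
        one_mem' := ⟨1, N.one_mem, 0, by simp⟩
        mul_mem' := by
          rintro _ _ ⟨n, hn, c, rfl⟩ ⟨m, hm, d, rfl⟩
          exact ⟨n * (z ^ c * m * (z ^ c)⁻¹), mul_mem hn (hN.conj_mem m hm (z ^ c)),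
            c + d, by group⟩
        inv_mem' := by
          rintro _ ⟨n, hn, c, rfl⟩
          exact ⟨z ^ (-c) * n⁻¹ * (z ^ (-c))⁻¹, hN.conj_mem _ (inv_mem hn) _, -c, by group⟩ }
    intro g
    have hg : g ∈ Subgroup.closure ({x, y, z} : Set G) := by rw [hgen]; trivial
    refine (Subgroup.closure_le P).mpr ?_ hg
    rintro w hw
    simp only [Set.mem_insert_iff, Set.mem_singleton_iff] at hw
    rcases hw with h | h | h <;> rw [h]
    · exact ⟨x, hxN, 0, by simp⟩
    · exact ⟨y, hyN, 0, by simp⟩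
    · exact ⟨1, N.one_mem, 1, by simp⟩
  have hNform : ∀ n ∈ N, ∃ a b : ℤ, n = x ^ a * y ^ b := by
    let Q : Subgroup G :=
      { carrier := {g : G | ∃ a b : ℤ, g = x ^ a * y ^ b}
        one_mem' := ⟨0, 0, by simp⟩
        mul_mem' := by
          rintro _ _ ⟨a, b, rfl⟩ ⟨c, d, rfl⟩
          refine ⟨a + c, b + d, ?_⟩
          have hcb : y ^ b * x ^ c = x ^ c * y ^ b := ((hc.zpow_zpow c b).symm).eq
          rw [zpow_add, zpow_add]
          calc x ^ a * y ^ b * (x ^ c * y ^ d) = x ^ a * (y ^ b * x ^ c) * y ^ d := by group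
          _ = x ^ a * (x ^ c * y ^ b) * y ^ d := by rw [hcb]
          _ = x ^ a * x ^ c * (y ^ b * y ^ d) := by group
        inv_mem' := by
          rintro _ ⟨a, b, rfl⟩
          refine ⟨-a, -b, ?_⟩
          rw [mul_inv_rev, zpow_neg, zpow_neg]
          exact ((hc.zpow_zpow a b).inv_inv.eq).symm }
    intro n hn
    rw [hNdef] at hn
    refine (Subgroup.closure_le Q).mpr ?_ hn
    rintro w hw
    simp only [Set.mem_insert_iff, Set.mem_singleton_iff] at hw
    rcases hw with h | h <;> rw [h]
    · exact ⟨1, 0, by simp⟩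
    · exact ⟨0, 1, by simp⟩
  have hNpow : ∀ n ∈ N, n ^ p = 1 := by
    intro n hn
    obtain ⟨a, b, rfl⟩ := hNform n hn
    have hcom : Commute (x ^ a) (y ^ b) := hc.zpow_zpow a b
    rw [hcom.mul_pow]
    have hxa : (x ^ a) ^ p = 1 := by
      rw [← zpow_natCast (x ^ a) p, ← zpow_mul, mul_comm, zpow_mul, zpow_natCast, hxp, one_zpow]
    have hya : (y ^ b) ^ p = 1 := by
      rw [← zpow_natCast (y ^ b) p, ← zpow_mul, mul_comm, zpow_mul, zpow_natCast, hyp, one_zpow]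
    rw [hxa, hya, one_mul]
  have hcop : IsCoprime (4 : ℤ) (p : ℤ) := by
    have h2 : Nat.Coprime 2 p := hodd.coprime_two_left
    have h4 : Nat.Coprime 4 p := by
      have h := Nat.Coprime.pow_left 2 h2
      norm_num at h
      exact h
    exact_mod_cast Nat.isCoprime_iff_coprime.mpr h4
  have hz4dvd : ∀ c : ℤ, z ^ c ∈ N → (4 : ℤ) ∣ c := by
    intro c hcN
    have h1 : (z ^ c) ^ p = 1 := hNpow _ hcN
    have h2 : z ^ (c * p) = 1 := by rw [zpow_mul, zpow_natCast]; exact h1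
    have h3 : ((orderOf z : ℤ)) ∣ c * p := orderOf_dvd_iff_zpow_eq_one.mpr h2
    rw [hz] at h3
    exact hcop.dvd_of_dvd_mul_right (by exact_mod_cast h3)
  -- basic facts about z^2
  have hz22 : z ^ 2 * z ^ 2 = 1 := by rw [← pow_add]; exact hz4
  have hz2inv : (z ^ 2 : G)⁻¹ = z ^ 2 := (inv_eq_of_mul_eq_one_right hz22).symm ▸ rfl
  have hz2ord : orderOf (z ^ 2 : G) = 2 := by
    rw [orderOf_pow, hz]
    norm_num
  have hzpown : (z : G) ^ (2 : ℤ) = z ^ (2 : ℕ) := by exact_mod_cast zpow_natCast z 2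
  have hconjpow : ∀ (g h : G) (n : ℕ), g⁻¹ * h ^ n * g = (g⁻¹ * h * g) ^ n := by
    intro g h n
    induction n with
    | zero => simp
    | succ k ih => rw [pow_succ, pow_succ, ← ih]; group
  have hx2 : (z ^ 2)⁻¹ * x * z ^ 2 = x⁻¹ := by
    have h : (z ^ 2 : G)⁻¹ * x * z ^ 2 = z⁻¹ * (z⁻¹ * x * z) * z := by
      rw [pow_two]; group
    rw [h, hzx]
    have h2 : z⁻¹ * y⁻¹ * z = (z⁻¹ * y * z)⁻¹ := by group
    rw [h2, hzy]
  have hy2 : (z ^ 2)⁻¹ * y * z ^ 2 = y⁻¹ := by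
    have h : (z ^ 2 : G)⁻¹ * y * z ^ 2 = z⁻¹ * (z⁻¹ * y * z) * z := by
      rw [pow_two]; group
    rw [h, hzy, hzx]
  have hNmem : ∀ a b : ℕ, x ^ a * y ^ b ∈ N := fun a b =>
    mul_mem (pow_mem hxN a) (pow_mem hyN b)
  have part1 : ∀ a b : ℕ, a < p → b < p → orderOf (z ^ 2 * x ^ a * y ^ b) = 2 := by
    intro a b ha hb
    have ea : (z ^ 2)⁻¹ * x ^ a * z ^ 2 = (x⁻¹) ^ a := by rw [hconjpow, hx2]
    have eb : (z ^ 2)⁻¹ * y ^ b * z ^ 2 = (y⁻¹) ^ b := by rw [hconjpow, hy2]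
    have e1 : (z ^ 2)⁻¹ * (x ^ a * y ^ b) * z ^ 2 = (x ^ a * y ^ b)⁻¹ := by
      calc (z ^ 2)⁻¹ * (x ^ a * y ^ b) * z ^ 2
          = ((z ^ 2)⁻¹ * x ^ a * z ^ 2) * ((z ^ 2)⁻¹ * y ^ b * z ^ 2) := by group
        _ = (x⁻¹) ^ a * (y⁻¹) ^ b := by rw [ea, eb]
        _ = (x ^ a)⁻¹ * (y ^ b)⁻¹ := by rw [inv_pow, inv_pow]
        _ = (x ^ a * y ^ b)⁻¹ := by
            rw [mul_inv_rev]
            exact (hc.pow_pow a b).inv_inv.eq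
    have hsq : (z ^ 2 * x ^ a * y ^ b) ^ 2 = 1 := by
      have key : (z ^ 2 * x ^ a * y ^ b) ^ 2
          = (z ^ 2 * z ^ 2) * ((z ^ 2)⁻¹ * (x ^ a * y ^ b) * z ^ 2) * (x ^ a * y ^ b) := by
        rw [pow_two]; group
      rw [key, e1, hz22, one_mul, inv_mul_cancel]
    have hne : z ^ 2 * x ^ a * y ^ b ≠ 1 := by
      intro h
      have h2 : z ^ (2 : ℕ) = (x ^ a * y ^ b)⁻¹ := by
        have h' : z ^ 2 * (x ^ a * y ^ b) = 1 := by rw [← mul_assoc]; exact h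
        exact eq_inv_of_mul_eq_one_left h'
      have hmem : z ^ ((2 : ℤ)) ∈ N := by
        rw [hzpown, h2]
        exact inv_mem (hNmem a b)
      have := hz4dvd 2 hmem
      norm_num at this
    haveI : Fact (Nat.Prime 2) := ⟨Nat.prime_two⟩
    exact orderOf_eq_prime hsq hne
  -- Part 2
  have part2 : Subgroup.closure {g : G | ∃ a b : ℕ, a < p ∧ b < p ∧ g = z ^ 2 * x ^ a * y ^ b} =
      Subgroup.closure ({x, y, z ^ 2} : Set G) := by
    apply le_antisymm
    · rw [Subgroup.closure_le]
      rintro g ⟨a, b, ha, hb, rfl⟩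
      have hx' : x ∈ Subgroup.closure ({x, y, z ^ 2} : Set G) :=
        Subgroup.subset_closure (by simp)
      have hy' : y ∈ Subgroup.closure ({x, y, z ^ 2} : Set G) :=
        Subgroup.subset_closure (by simp)
      have hz' : (z ^ 2 : G) ∈ Subgroup.closure ({x, y, z ^ 2} : Set G) :=
        Subgroup.subset_closure (by simp)
      exact mul_mem (mul_mem hz' (pow_mem hx' a)) (pow_mem hy' b)
    · rw [Subgroup.closure_le]
      have hz2S : (z ^ 2 : G) ∈
          Subgroup.closure {g : G | ∃ a b : ℕ, a < p ∧ b < p ∧ g = z ^ 2 * x ^ a * y ^ b} :=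
        Subgroup.subset_closure ⟨0, 0, hp.pos, hp.pos, by simp⟩
      have hxS : x ∈
          Subgroup.closure {g : G | ∃ a b : ℕ, a < p ∧ b < p ∧ g = z ^ 2 * x ^ a * y ^ b} := by
        have h1 : z ^ 2 * x ∈
            Subgroup.closure {g : G | ∃ a b : ℕ, a < p ∧ b < p ∧ g = z ^ 2 * x ^ a * y ^ b} :=
          Subgroup.subset_closure ⟨1, 0, hp1, hp.pos, by simp⟩
        have h3 := mul_mem (inv_mem hz2S) h1
        simpa using h3
      have hyS : y ∈
          Subgroup.closure {g : G | ∃ a b : ℕ, a < p ∧ b < p ∧ g = z ^ 2 * x ^ a * y ^ b} := by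
        have h1 : z ^ 2 * y ∈
            Subgroup.closure {g : G | ∃ a b : ℕ, a < p ∧ b < p ∧ g = z ^ 2 * x ^ a * y ^ b} :=
          Subgroup.subset_closure ⟨0, 1, hp.pos, hp1, by simp⟩
        have h3 := mul_mem (inv_mem hz2S) h1
        simpa using h3
      rintro w hw
      simp only [Set.mem_insert_iff, Set.mem_singleton_iff] at hw
      rcases hw with h | h | h <;> rw [h]
      exacts [hxS, hyS, hz2S]
  -- Part 3
  set K := Subgroup.closure ({x, y, z ^ 2} : Set G) with hK
  have hxK : x ∈ K := Subgroup.subset_closure (by simp)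
  have hyK : y ∈ K := Subgroup.subset_closure (by simp)
  have hz2K : (z ^ 2 : G) ∈ K := Subgroup.subset_closure (by simp)
  have hNK : N ≤ K := by
    rw [hNdef]
    rw [Subgroup.closure_le]
    rintro w hw
    simp only [Set.mem_insert_iff, Set.mem_singleton_iff] at hw
    rcases hw with h | h <;> rw [h]
    exacts [hxK, hyK]
  have hzevenK : ∀ c : ℤ, (2 : ℤ) ∣ c → z ^ c ∈ K := by
    rintro _ ⟨d, rfl⟩
    have h : z ^ (2 * d) = (z ^ 2 : G) ^ d := by rw [zpow_mul, hzpown]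
    rw [h]
    exact zpow_mem hz2K d
  have hKform : ∀ g ∈ K, ∃ n ∈ N, ∃ c : ℤ, (2 : ℤ) ∣ c ∧ g = n * z ^ c := by
    let K' : Subgroup G :=
      { carrier := {g : G | ∃ n ∈ N, ∃ c : ℤ, (2 : ℤ) ∣ c ∧ g = n * z ^ c}
        one_mem' := ⟨1, N.one_mem, 0, dvd_zero 2, by simp⟩
        mul_mem' := by
          rintro _ _ ⟨n, hn, c, hcd, rfl⟩ ⟨m, hm, d, hdd, rfl⟩
          exact ⟨n * (z ^ c * m * (z ^ c)⁻¹), mul_mem hn (hN.conj_mem m hm (z ^ c)),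
            c + d, dvd_add hcd hdd, by group⟩
        inv_mem' := by
          rintro _ ⟨n, hn, c, hcd, rfl⟩
          exact ⟨z ^ (-c) * n⁻¹ * (z ^ (-c))⁻¹, hN.conj_mem _ (inv_mem hn) _, -c,
            dvd_neg.mpr hcd, by group⟩ }
    intro g hgK
    rw [hK] at hgK
    refine (Subgroup.closure_le K').mpr ?_ hgK
    rintro w hw
    simp only [Set.mem_insert_iff, Set.mem_singleton_iff] at hw
    rcases hw with h | h | h <;> rw [h]
    · exact ⟨x, hxN, 0, dvd_zero 2, by simp⟩
    · exact ⟨y, hyN, 0, dvd_zero 2, by simp⟩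
    · exact ⟨1, N.one_mem, 2, dvd_refl 2, by rw [hzpown, one_mul]⟩
  have hzK : z ∉ K := by
    intro hzmem
    obtain ⟨n, hn, c, hc2, he⟩ := hKform z hzmem
    have hn' : n = z * (z ^ c)⁻¹ := eq_mul_inv_iff_mul_eq.mpr he.symm
    have hmem : z ^ ((1 : ℤ) - c) ∈ N := by
      rw [zpow_sub, zpow_one, ← hn']
      exact hn
    have h4 : (4 : ℤ) ∣ 1 - c := hz4dvd _ hmem
    omega
  have hinvK : ∀ g : G, orderOf g = 2 → g ∈ K := by
    intro g hg
    obtain ⟨n, hn, c, rfl⟩ := hdecomp g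
    have hg2 : (n * z ^ c) ^ 2 = 1 := by rw [← hg]; exact pow_orderOf_eq_one _
    have hm : z ^ c * n * (z ^ c)⁻¹ ∈ N := hN.conj_mem n hn _
    have he : z ^ (2 * c) = (n * (z ^ c * n * (z ^ c)⁻¹))⁻¹ := by
      have h : (n * z ^ c) ^ 2 = (n * (z ^ c * n * (z ^ c)⁻¹)) * z ^ (2 * c) := by
        rw [pow_two]; group
      rw [h] at hg2
      exact eq_inv_of_mul_eq_one_right hg2
    have hzc : z ^ (2 * c) ∈ N := he ▸ inv_mem (mul_mem hn hm)
    have h4 : (4 : ℤ) ∣ 2 * c := hz4dvd _ hzc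
    have h2 : (2 : ℤ) ∣ c := by omega
    exact mul_mem (hNK hn) (hzevenK c h2)
  have hHK : Subgroup.closure {g : G | orderOf g = 2} = K := by
    apply le_antisymm
    · exact (Subgroup.closure_le K).mpr fun g hg => hinvK g hg
    · rw [hK, Subgroup.closure_le]
      have hz2H : (z ^ 2 : G) ∈ Subgroup.closure {g : G | orderOf g = 2} :=
        Subgroup.subset_closure hz2ord
    -- x ∈ H
      have hxH : x ∈ Subgroup.closure {g : G | orderOf g = 2} := by
        have h1 : orderOf (z ^ 2 * x) = 2 := by
          have := part1 1 0 hp1 hp.pos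
          simpa using this
        have h2 : z ^ 2 * x ∈ Subgroup.closure {g : G | orderOf g = 2} :=
          Subgroup.subset_closure h1
        have h4 := mul_mem (inv_mem hz2H) h2
        simpa using h4
      have hyH : y ∈ Subgroup.closure {g : G | orderOf g = 2} := by
        have h1 : orderOf (z ^ 2 * y) = 2 := by
          have := part1 0 1 hp.pos hp1
          simpa using this
        have h2 : z ^ 2 * y ∈ Subgroup.closure {g : G | orderOf g = 2} :=
          Subgroup.subset_closure h1
        have h4 := mul_mem (inv_mem hz2H) h2
        simpa using h4
      rintro w hw
      simp only [Set.mem_insert_iff, Set.mem_singleton_iff] at hw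
      rcases hw with h | h | h <;> rw [h]
      exacts [hxH, hyH, hz2H]
  have hindex : (Subgroup.closure {g : G | orderOf g = 2}).index = 2 := by
    rw [hHK, Subgroup.index_eq_two_iff]
    refine ⟨z, fun b => ?_⟩
    obtain ⟨n, hn, c, rfl⟩ := hdecomp b
    by_cases hcpar : (2 : ℤ) ∣ c
    · have hbK : n * z ^ c ∈ K := mul_mem (hNK hn) (hzevenK c hcpar)
      refine Or.inr ⟨hbK, fun hbz => hzK ?_⟩
      have h : z = (n * z ^ c)⁻¹ * (n * z ^ c * z) := by group
      rw [h]; exact mul_mem (inv_mem hbK) hbz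
    · have hbzK : n * z ^ c * z ∈ K := by
        have h : n * z ^ c * z = n * z ^ (c + 1) := by
          rw [zpow_add, zpow_one, mul_assoc]
        rw [h]
        exact mul_mem (hNK hn) (hzevenK _ (by omega))
      refine Or.inl ⟨hbzK, fun hb => hzK ?_⟩
      have h : z = (n * z ^ c)⁻¹ * (n * z ^ c * z) := by group
      rw [h]; exact mul_mem (inv_mem hb) hbzK
  exact ⟨part1, part2, hindex⟩
end

section
/- Let p be a prime with p ≡ 1 (mod 4), f an integer with f² ≡ -1 (mod p), and G = ⟨x,y,z | x^p = y^p = z⁴ = 1, xy = yx, z⁻¹xz = x^f, z⁻¹yz = y^f⟩. Then the subgroup of G generated by all involutions has index 2 in G. -/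
/-!
The involutions generate a normal subgroup `H`. Since `z²` inverts `x` and `y`, which have odd
order, the elements `z²`, `x z²` and `y z²` are involutions; hence `x, y, z² ∈ H` and `G ⧸ H` is
generated by the image of `z`, of order at most `2`. On the other hand `P = ⟨x, y⟩` is an abelian
normal subgroup of odd exponent `p`, so `z² ∉ P` and `G ⧸ P` is cyclic of order `4`, generated by
the image of `z`. Every involution maps into the subgroup of index `2` of this cyclic group, which
misses the image of `z`; hence `z ∉ H`.
-/

open Subgroup

section

variable {G : Type*} [Group G]

instance Subgroup.closure_setOf_orderOf_eq_normal (n : ℕ) :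
    (closure {g : G | orderOf g = n}).Normal := by
  have hconj : Group.conjugatesOfSet {g : G | orderOf g = n} ⊆ {g | orderOf g = n} := by
    intro b hb
    obtain ⟨a, ha, hab⟩ := Group.mem_conjugatesOfSet_iff.1 hb
    obtain ⟨c, rfl⟩ := isConj_iff.1 hab
    exact (SemiconjBy.orderOf_eq c (by simp [SemiconjBy, mul_assoc])).symm.trans ha
  rw [le_antisymm (closure_mono Group.subset_conjugatesOfSet) (closure_mono hconj)]
  exact normalClosure_normal

theorem pow_eq_inv_of_orderOf_dvd {x : G} {n : ℕ} (h : orderOf x ∣ n + 1) : x ^ n = x⁻¹ :=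
  eq_inv_of_mul_eq_one_left (by rw [← pow_succ, orderOf_dvd_iff_pow_eq_one.1 h])

theorem sq_inv_mul_mul_sq_of_inv_mul_mul_eq_pow {x z : G} {f : ℕ} (h : z⁻¹ * x * z = x ^ f) :
    (z ^ 2)⁻¹ * x * z ^ 2 = x ^ (f ^ 2) := by
  have hpow : z⁻¹ * x ^ f * z = x ^ (f * f) := by
    simpa [pow_mul, h] using (conj_pow (a := z⁻¹) (b := x) (i := f)).symm
  calc (z ^ 2)⁻¹ * x * z ^ 2 = z⁻¹ * (z⁻¹ * x * z) * z := by
        simp only [sq, mul_inv_rev, mul_assoc]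
    _ = x ^ (f ^ 2) := by rw [h, hpow, sq]

theorem mem_closure_involutions_of_inv_mul_mul_eq_inv {g t : G} (ht : orderOf t = 2)
    (hg : t⁻¹ * g * t = g⁻¹) (hodd : Odd (orderOf g)) :
    g ∈ closure {a : G | orderOf a = 2} := by
  have ht_inv : t⁻¹ = t := inv_eq_of_mul_eq_one_right (by rw [← sq, ← ht, pow_orderOf_eq_one])
  have hgt : orderOf (g * t) = 2 := by
    refine orderOf_eq_prime ?_ fun h ↦ ?_
    · calc (g * t) ^ 2 = g * (t⁻¹ * g * t) := by rw [ht_inv, sq]; simp only [mul_assoc]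
        _ = 1 := by rw [hg, mul_inv_cancel]
    · rw [mul_eq_one_iff_eq_inv, ht_inv] at h
      rw [h, ht] at hodd
      exact Nat.not_odd_iff_even.2 even_two hodd
  simpa using mul_mem (Subgroup.subset_closure (k := {a : G | orderOf a = 2}) hgt)
    (inv_mem (Subgroup.subset_closure ht))

theorem mem_closure_involutions_of_inv_mul_mul_eq_pow {x z : G} {f : ℕ}
    (hz : orderOf (z ^ 2) = 2) (hzx : z⁻¹ * x * z = x ^ f) (hf : orderOf x ∣ f ^ 2 + 1)
    (hodd : Odd (orderOf x)) : x ∈ closure {a : G | orderOf a = 2} :=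
  mem_closure_involutions_of_inv_mul_mul_eq_inv hz
    (by rw [sq_inv_mul_mul_sq_of_inv_mul_mul_eq_pow hzx, pow_eq_inv_of_orderOf_dvd hf]) hodd

theorem pow_eq_one_of_mem_closure_of_pairwise_commute {s : Set G} {n : ℕ}
    (hcomm : ∀ a ∈ s, ∀ b ∈ s, a * b = b * a) (hs : ∀ a ∈ s, a ^ n = 1) {g : G}
    (hg : g ∈ closure s) : g ^ n = 1 := by
  have := isMulCommutative_closure hcomm
  induction hg using closure_induction with
  | mem a ha => exact hs a ha
  | one => exact one_pow n
  | mul a b ha hb hna hnb => rw [Commute.mul_pow (setLike_mul_comm ha hb), hna, hnb, one_mul]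
  | inv a _ hna => rw [inv_pow, hna, inv_one]

theorem Subgroup.mem_normalizer_of_conj_mem_of_pow_eq_one {H : Subgroup G} {g : G} {n : ℕ}
    (hgn : g ^ (n + 1) = 1) (h : ∀ a ∈ H, g * a * g⁻¹ ∈ H) : g ∈ normalizer H := by
  have hpow : ∀ k : ℕ, ∀ a ∈ H, g ^ k * a * (g ^ k)⁻¹ ∈ H := by
    intro k
    induction k with
    | zero => simp
    | succ k ih => exact fun a ha ↦ by simpa [pow_succ, mul_assoc] using ih _ (h a ha)
  refine mem_normalizer_iff.2 fun a ↦ ⟨h a, fun ha ↦ ?_⟩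
  have hinv : g ^ n = g⁻¹ := eq_inv_of_mul_eq_one_left (by rw [← pow_succ, hgn])
  simpa [hinv, mul_assoc] using hpow n _ ha

theorem closure_pair_normal_of_inv_mul_mul_eq_pow {x y z : G} {f n : ℕ}
    (hgen : closure {x, y, z} = ⊤) (hz : z ^ (n + 1) = 1)
    (hzx : z⁻¹ * x * z = x ^ f) (hzy : z⁻¹ * y * z = y ^ f) : (closure {x, y}).Normal := by
  set P := closure ({x, y} : Set G)
  have hxP : x ∈ P := subset_closure (by simp)
  have hyP : y ∈ P := subset_closure (by simp)
  have hconj : P ≤ P.comap (MulAut.conj z⁻¹).toMonoidHom := (closure_le _).2 <| by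
    rintro a (rfl | rfl)
    · simpa [mul_assoc, ← hzx] using pow_mem hxP f
    · simpa [mul_assoc, ← hzy] using pow_mem hyP f
  have hzP : z⁻¹ ∈ normalizer (P : Set G) :=
    mem_normalizer_of_conj_mem_of_pow_eq_one (n := n) (by rw [inv_pow, hz, inv_one])
      fun a ha ↦ by simpa [mul_assoc] using hconj ha
  rw [← normalizer_eq_top_iff, eq_top_iff, ← hgen, closure_le]
  rintro a (rfl | rfl | rfl)
  · exact le_normalizer hxP
  · exact le_normalizer hyP
  · simpa using inv_mem hzP

theorem QuotientGroup.zpowers_mk_eq_top {N : Subgroup G} [N.Normal] {x y z : G}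
    (hgen : closure {x, y, z} = ⊤) (hx : x ∈ N) (hy : y ∈ N) :
    zpowers (z : G ⧸ N) = ⊤ := by
  have hle : closure {x, y, z} ≤ (zpowers (z : G ⧸ N)).comap (QuotientGroup.mk' N) := by
    rw [closure_le]
    rintro a (rfl | rfl | rfl)
    · simp [(QuotientGroup.eq_one_iff a).2 hx]
    · simp [(QuotientGroup.eq_one_iff a).2 hy]
    · exact mem_zpowers _
  rw [hgen] at hle
  exact eq_top_iff.2 fun q _ ↦ QuotientGroup.induction_on q fun g ↦ hle (mem_top g)

theorem mem_zpowers_pow_of_pow_eq_one {a b : G} {m n : ℕ} (ha : orderOf a = m * n) (hm : m ≠ 0)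
    (hb : b ∈ zpowers a) (hbm : b ^ m = 1) : b ∈ zpowers (a ^ n) := by
  obtain ⟨k, rfl⟩ := mem_zpowers_iff.1 hb
  have hdvd : ((m * n : ℕ) : ℤ) ∣ m * k := by
    rw [← ha, orderOf_dvd_iff_zpow_eq_one, mul_comm, zpow_mul, zpow_natCast, hbm]
  push_cast at hdvd
  obtain ⟨j, hj⟩ := Int.dvd_of_mul_dvd_mul_left (Int.natCast_ne_zero.2 hm) hdvd
  exact mem_zpowers_iff.2 ⟨j, by rw [hj, ← zpow_natCast, ← zpow_mul]⟩

theorem notMem_zpowers_sq_of_even_orderOf {a : G} (ha : Even (orderOf a)) :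
    a ∉ zpowers (a ^ 2) := by
  intro h
  obtain ⟨k, hk⟩ := mem_zpowers_iff.1 h
  have hdvd : (orderOf a : ℤ) ∣ 2 * k - 1 := by
    rw [orderOf_dvd_iff_zpow_eq_one, zpow_sub_one, zpow_mul, zpow_two, ← sq, hk, mul_inv_cancel]
  have := (Int.natCast_dvd_natCast.2 (even_iff_two_dvd.1 ha)).trans hdvd
  omega

theorem notMem_closure_involutions_of_orderOf_mk_eq_four {P : Subgroup G} [P.Normal] {z : G}
    (hP : zpowers (z : G ⧸ P) = ⊤) (hz : orderOf (z : G ⧸ P) = 4) :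
    z ∉ closure {g : G | orderOf g = 2} := by
  have hle : closure {g : G | orderOf g = 2} ≤
      (zpowers ((z : G ⧸ P) ^ 2)).comap (QuotientGroup.mk' P) := by
    refine (closure_le _).2 fun g (hg : orderOf g = 2) ↦
      mem_zpowers_pow_of_pow_eq_one (m := 2) hz two_ne_zero (hP ▸ mem_top _) ?_
    rw [← map_pow, ← hg, pow_orderOf_eq_one, map_one]
  exact fun h ↦ notMem_zpowers_sq_of_even_orderOf (by rw [hz]; decide) (hle h)

theorem index_eq_two_of_closure_eq_top {N : Subgroup G} [N.Normal] {x y z : G}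
    (hgen : closure {x, y, z} = ⊤) (hx : x ∈ N) (hy : y ∈ N) (hz : z ∉ N) (hz2 : z ^ 2 ∈ N) :
    N.index = 2 := by
  have hord : orderOf (z : G ⧸ N) = 2 := orderOf_eq_prime
    ((QuotientGroup.eq_one_iff _).2 hz2) (mt (QuotientGroup.eq_one_iff z).1 hz)
  rw [index_eq_card, ← card_top, ← QuotientGroup.zpowers_mk_eq_top hgen hx hy, Nat.card_zpowers,
    hord]

end

theorem stmt7_general (p f : ℕ) (hp4 : p % 4 = 1)
    (hf : (f : ZMod p) ^ 2 = -1)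
    {G : Type*} [Group G] (x y z : G)
    (hgen : Subgroup.closure ({x, y, z} : Set G) = ⊤)
    (hx : orderOf x = p) (hy : orderOf y = p) (hz : orderOf z = 4)
    (hxy : x * y = y * x)
    (hzx : z⁻¹ * x * z = x ^ f) (hzy : z⁻¹ * y * z = y ^ f) :
    (Subgroup.closure {g : G | orderOf g = 2}).index = 2 := by
  have hp_odd : Odd p := Nat.odd_iff.2 (by omega)
  have hpf : p ∣ f ^ 2 + 1 := (ZMod.natCast_eq_zero_iff _ _).1 (by push_cast [hf]; ring)
  have hz4 : z ^ 4 = 1 := hz ▸ pow_orderOf_eq_one z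
  have hz2 : orderOf (z ^ 2) = 2 := by rw [orderOf_pow' z two_ne_zero, hz]; rfl
  have hxH := mem_closure_involutions_of_inv_mul_mul_eq_pow hz2 hzx (hx ▸ hpf) (hx ▸ hp_odd)
  have hyH := mem_closure_involutions_of_inv_mul_mul_eq_pow hz2 hzy (hy ▸ hpf) (hy ▸ hp_odd)
  set P := closure ({x, y} : Set G)
  have hP : P.Normal := closure_pair_normal_of_inv_mul_mul_eq_pow hgen hz4 hzx hzy
  have hxp : x ^ p = 1 := hx ▸ pow_orderOf_eq_one x
  have hyp : y ^ p = 1 := hy ▸ pow_orderOf_eq_one y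
  have hz2P : z ^ 2 ∉ P := fun h ↦ hp_odd.not_two_dvd_nat <| hz2 ▸ orderOf_dvd_of_pow_eq_one
    (pow_eq_one_of_mem_closure_of_pairwise_commute (by simp [hxy]) (by simp [hxp, hyp]) h)
  have hzP : orderOf (z : G ⧸ P) = 4 := orderOf_eq_prime_pow (p := 2) (n := 1)
    (mt (QuotientGroup.eq_one_iff _).1 hz2P) (by norm_num [← QuotientGroup.mk_pow, hz4])
  exact index_eq_two_of_closure_eq_top hgen hxH hyH
    (notMem_closure_involutions_of_orderOf_mk_eq_four
      (QuotientGroup.zpowers_mk_eq_top hgen (subset_closure (by simp)) (subset_closure (by simp)))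
      hzP)
    (subset_closure hz2)

theorem stmt7 (p f : ℕ) (hp : p.Prime) (hp4 : p % 4 = 1)
    (hf : (f : ZMod p) ^ 2 = -1)
    {G : Type*} [Group G] [Fintype G] (x y z : G)
    (hgen : Subgroup.closure ({x, y, z} : Set G) = ⊤)
    (hx : orderOf x = p) (hy : orderOf y = p) (hz : orderOf z = 4)
    (hxy : x * y = y * x)
    (hzx : z⁻¹ * x * z = x ^ f) (hzy : z⁻¹ * y * z = y ^ f)
    (hcard : Fintype.card G = 4 * p ^ 2) :
    (Subgroup.closure {g : G | orderOf g = 2}).index = 2 :=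
  stmt7_general p f hp4 hf x y z hgen hx hy hz hxy hzx hzy
end

section
/- Let p ≡ 1 (mod 4) be prime and G = ⟨x,y,z | x^p = y^p = z⁴ = 1, xy = yx, z⁻¹xz = x, z⁻¹yz = y⁻¹⟩. Then G admits no DRAD difference set with subgroup H = ⟨x, z²⟩ (the center of G). -/
/-!
The exponent of `x` in the normal form `x ^ a * y ^ b * z ^ c` is a homomorphism `G → ℤ/p`, so
there is a linear character `χ` of `G` with `χ x = ζ_p`; it is nontrivial on `H` and its values
lie in `ℚ(ζ_p)`. Summing `χ` over the partition `G = H ⊔ D ⊔ D⁻¹` gives `χ(D⁻¹) = -χ(D)`, and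
the difference set property gives `χ(D) χ(D⁻¹) = |D| - λ = p²`. Hence `(χ(D) / p)² = -1` with
`χ(D) / p ∈ ℚ(ζ_p)`, which is impossible: `ℚ(ζ_p, i)` has degree `φ(4p) = 2(p - 1) > p - 1`.
-/

open Finset IntermediateField

theorem Commute.left_mem_zpowers_mul {G : Type*} [Group G] {a b : G} (hab : Commute a b)
    (hcop : (orderOf a).Coprime (orderOf b)) : a ∈ Subgroup.zpowers (a * b) := by
  obtain ⟨m, hm⟩ := exists_pow_eq_self_of_coprime hcop.symm
  have h := pow_mem (Subgroup.mem_zpowers (a * b)) (orderOf b * m)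
  rwa [pow_mul, hab.mul_pow, pow_orderOf_eq_one, mul_one, hm] at h

open Subgroup in
theorem Subgroup.closure_pair_eq_zpowers_mul {G : Type*} [Group G] {a b : G} (hab : Commute a b)
    (hcop : (orderOf a).Coprime (orderOf b)) : closure {a, b} = zpowers (a * b) := by
  apply le_antisymm
  · rw [closure_le]
    rintro g (rfl | rfl)
    · exact hab.left_mem_zpowers_mul hcop
    · rw [hab.eq]
      exact hab.symm.left_mem_zpowers_mul hcop.symm
  · rw [zpowers_le]
    exact mul_mem (subset_closure (by simp)) (subset_closure (by simp))

theorem Subgroup.card_closure_pair_of_coprime {G : Type*} [Group G] {a b : G} (hab : Commute a b)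
    (hcop : (orderOf a).Coprime (orderOf b)) :
    Nat.card (closure {a, b}) = orderOf a * orderOf b := by
  rw [closure_pair_eq_zpowers_mul hab hcop, Nat.card_zpowers,
    hab.orderOf_mul_eq_mul_orderOf_of_coprime hcop]

section ZModPow

variable {n : ℕ}

theorem pow_zmod_val_add [NeZero n] {M : Type*} [Monoid M] {w : M} (hw : w ^ n = 1)
    (a b : ZMod n) : w ^ (a + b).val = w ^ a.val * w ^ b.val := by
  rw [ZMod.val_add, ← pow_eq_pow_mod _ hw, pow_add]

theorem pow_zmod_val_one {M : Type*} [Monoid M] {w : M} (hw : w ^ n = 1) :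
    w ^ (1 : ZMod n).val = w := by
  rw [ZMod.val_one_eq_one_mod, ← pow_eq_pow_mod _ hw, pow_one]

theorem pow_zmod_val_neg [NeZero n] {G : Type*} [Group G] {w : G} (hw : w ^ n = 1)
    (a : ZMod n) : w ^ (-a).val = (w ^ a.val)⁻¹ :=
  eq_inv_of_mul_eq_one_left <| by
    rw [← pow_zmod_val_add hw, neg_add_cancel, ZMod.val_zero, pow_zero]

end ZModPow

section NormalForm

variable {G : Type*} [Group G] {p : ℕ} [NeZero p] {x y z : G}

def normalForm (x y z : G) (p : ℕ) (t : ZMod p × ZMod p × ZMod 4) : G :=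
  x ^ t.1.val * y ^ t.2.1.val * z ^ t.2.2.val

theorem pow_mul_pow_zmod_val_of_mul_eq_inv_mul (hy : y ^ p = 1) (hzy : z * y = y⁻¹ * z) (c : ℕ)
    (b : ZMod p) : z ^ c * y ^ b.val = y ^ ((-1) ^ c * b).val * z ^ c := by
  induction c generalizing b with
  | zero => simp
  | succ c ih =>
    have hz : z * y ^ b.val = y ^ (-b).val * z := by
      rw [SemiconjBy.pow_right hzy, inv_pow, pow_zmod_val_neg hy]
    rw [pow_succ, mul_assoc, hz, ← mul_assoc, ih, mul_assoc, pow_succ]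
    congr 3
    ring

variable (hx : x ^ p = 1) (hy : y ^ p = 1) (hz : z ^ 4 = 1) (hxy : Commute x y)
  (hxz : Commute x z) (hzy : z * y = y⁻¹ * z)
include hx hy hz hxy hxz hzy

theorem normalForm_mul (t t' : ZMod p × ZMod p × ZMod 4) :
    normalForm x y z p t * normalForm x y z p t' =
      normalForm x y z p (t.1 + t'.1, t.2.1 + (-1) ^ t.2.2.val * t'.2.1, t.2.2 + t'.2.2) := by
  obtain ⟨a, b, c⟩ := t
  obtain ⟨a', b', c'⟩ := t'
  have hcomm : Commute (x ^ a'.val) (y ^ b.val * z ^ c.val) :=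
    (hxy.pow_pow _ _).mul_right (hxz.pow_pow _ _)
  simp only [normalForm, pow_zmod_val_add hx, pow_zmod_val_add hy, pow_zmod_val_add hz]
  calc x ^ a.val * y ^ b.val * z ^ c.val * (x ^ a'.val * y ^ b'.val * z ^ c'.val)
      = x ^ a.val * ((y ^ b.val * z ^ c.val) * x ^ a'.val) * (y ^ b'.val * z ^ c'.val) := by
        simp only [mul_assoc]
    _ = x ^ a.val * x ^ a'.val * (y ^ b.val * (z ^ c.val * y ^ b'.val)) * z ^ c'.val := by
        rw [← hcomm.eq]
        simp only [mul_assoc]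
    _ = _ := by
        rw [pow_mul_pow_zmod_val_of_mul_eq_inv_mul hy hzy]
        simp only [mul_assoc]

theorem normalForm_surjective [Finite G] (hgen : Subgroup.closure ({x, y, z} : Set G) = ⊤) :
    Function.Surjective (normalForm x y z p) := by
  let S : Submonoid G :=
    { carrier := Set.range (normalForm x y z p)
      mul_mem' := by
        rintro _ _ ⟨t, rfl⟩ ⟨t', rfl⟩
        exact ⟨_, (normalForm_mul hx hy hz hxy hxz hzy t t').symm⟩
      one_mem' := ⟨0, by simp [normalForm]⟩ }
  have hgens : Submonoid.closure ({x, y, z} : Set G) ≤ S := by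
    rw [Submonoid.closure_le]
    rintro g (rfl | rfl | rfl)
    · exact ⟨(1, 0, 0), by simp [normalForm, pow_zmod_val_one hx]⟩
    · exact ⟨(0, 1, 0), by simp [normalForm, pow_zmod_val_one hy]⟩
    · exact ⟨(0, 0, 1), by simp [normalForm, pow_zmod_val_one hz]⟩
  intro g
  apply hgens
  rw [← Subgroup.closure_toSubmonoid_of_finite, hgen]
  trivial

theorem exists_monoidHom_zmod_apply_eq_ofAdd_one [Fintype G]
    (hgen : Subgroup.closure ({x, y, z} : Set G) = ⊤) (hcard : Fintype.card G = 4 * p ^ 2) :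
    ∃ ψ : G →* Multiplicative (ZMod p), ψ x = Multiplicative.ofAdd 1 := by
  have hbij : Function.Bijective (normalForm x y z p) := by
    rw [Fintype.bijective_iff_surjective_and_card]
    refine ⟨normalForm_surjective hx hy hz hxy hxz hzy hgen, ?_⟩
    simp only [Fintype.card_prod, ZMod.card, hcard]
    ring
  let e := Equiv.ofBijective _ hbij
  refine ⟨MonoidHom.mk' (fun g => .ofAdd (e.symm g).1) fun g h => ?_, ?_⟩
  · obtain ⟨t, rfl⟩ := e.surjective g
    obtain ⟨t', rfl⟩ := e.surjective h
    simp only [e, Equiv.ofBijective_apply, normalForm_mul hx hy hz hxy hxz hzy]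
    simp only [← Equiv.ofBijective_apply _ hbij, Equiv.symm_apply_apply, ofAdd_add]
  · have : e (1, 0, 0) = x := by simp [e, normalForm, pow_zmod_val_one hx]
    simp [← this]

end NormalForm

open Polynomial in
theorem IsPrimitiveRoot.finrank_adjoin_rat {L : Type*} [Field L] [CharZero L] {n : ℕ} (hn : 0 < n)
    {μ : L} (hμ : IsPrimitiveRoot μ n) : Module.finrank ℚ ℚ⟮μ⟯ = n.totient := by
  rw [adjoin.finrank (hμ.isIntegral hn).tower_top, ← cyclotomic_eq_minpoly_rat hμ hn,
    natDegree_cyclotomic]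

open Polynomial in
theorem IsPrimitiveRoot.sq_ne_neg_one_of_mem_adjoin {L : Type*} [Field L] [CharZero L] {n : ℕ}
    (hn : Odd n) {ζ : L} (hζ : IsPrimitiveRoot ζ n) {τ : L} (hτ : τ ∈ ℚ⟮ζ⟯) : τ ^ 2 ≠ -1 := by
  intro hτ2
  have hτ4 : orderOf τ = 4 :=
    orderOf_eq_prime_pow (p := 2) (n := 1) (by norm_num [hτ2])
      (by rw [pow_succ, pow_mul, pow_one, hτ2]; norm_num)
  have hcop : Nat.Coprime 4 n := Nat.Coprime.pow_left 2 (Nat.coprime_two_left.2 hn)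
  have hprim : IsPrimitiveRoot (τ * ζ) (4 * n) := by
    rw [← hτ4, hζ.eq_orderOf, ← (Commute.all τ ζ).orderOf_mul_eq_mul_orderOf_of_coprime
      (by rwa [hτ4, ← hζ.eq_orderOf])]
    exact .orderOf _
  have : FiniteDimensional ℚ ℚ⟮ζ⟯ := adjoin.finiteDimensional (hζ.isIntegral hn.pos).tower_top
  have hle : ℚ⟮τ * ζ⟯ ≤ ℚ⟮ζ⟯ := adjoin_simple_le_iff.2 (mul_mem hτ (mem_adjoin_simple_self ℚ ζ))
  have hdeg := finrank_le_of_le_right hle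
  rw [hprim.finrank_adjoin_rat (Nat.mul_pos four_pos hn.pos), hζ.finrank_adjoin_rat hn.pos,
    Nat.totient_mul hcop, show Nat.totient 4 = 2 by decide] at hdeg
  have := Nat.totient_pos.2 hn.pos
  omega

section DifferenceSets

variable {G : Type*} [Group G] [Fintype G] [DecidableEq G]

theorem IsDiffSet.sum_mul_sum_inv {R : Type*} [CommRing R] {D : Finset G} {l : ℕ}
    (hD : IsDiffSet D l) (f : G →* R) :
    (∑ d ∈ D, f d) * ∑ d ∈ D, f d⁻¹ = l * ∑ g, f g + (#D - l) := by
  have hfiber : ∀ g : G, (#((D ×ˢ D).filter (fun q => q.1 * q.2⁻¹ = g)) : R) =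
      l + if g = 1 then (#D - l : R) else 0 := by
    intro g
    split_ifs with hg
    · subst hg
      have : (D ×ˢ D).filter (fun q => q.1 * q.2⁻¹ = 1) = D.diag := by
        ext ⟨a, b⟩
        simp only [mem_filter, mem_product, mem_diag, mul_inv_eq_one]
        constructor
        · rintro ⟨⟨ha, -⟩, rfl⟩; exact ⟨ha, rfl⟩
        · rintro ⟨ha, rfl⟩; exact ⟨⟨ha, ha⟩, rfl⟩
      simp [this]
    · simp [hD g hg]
  calc (∑ d ∈ D, f d) * ∑ d ∈ D, f d⁻¹
      = ∑ q ∈ D ×ˢ D, f (q.1 * q.2⁻¹) := by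
        simp only [sum_mul_sum, sum_product, map_mul]
    _ = ∑ g, #((D ×ˢ D).filter (fun q => q.1 * q.2⁻¹ = g)) * f g := by
        rw [← sum_fiberwise (D ×ˢ D) (fun q => q.1 * q.2⁻¹)]
        refine sum_congr rfl fun g _ => ?_
        rw [sum_congr rfl fun q hq => congrArg f (mem_filter.1 hq).2, sum_const, nsmul_eq_mul]
    _ = l * ∑ g, f g + (#D - l) := by
        simp only [hfiber, add_mul, sum_add_distrib, mul_sum, ite_mul, zero_mul,
          sum_ite_eq', mem_univ, if_true, map_one, mul_one]

theorem IsDiffSet.card_mul_card_s12 {D : Finset G} {l : ℕ} (hD : IsDiffSet D l) :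
    (#D * #D : ℤ) = l * Fintype.card G + (#D - l) := by
  simpa using hD.sum_mul_sum_inv (1 : G →* ℤ)

theorem IsDRAD.sum_eq {M : Type*} [AddCommMonoid M] {D : Finset G} {H : Subgroup G} [Fintype H]
    {l : ℕ} (hD : IsDRAD D H l) (f : G → M) :
    ∑ g, f g = ∑ h : H, f h + ∑ d ∈ D, (f d + f d⁻¹) := by
  classical
  obtain ⟨hinv, hH, -⟩ := hD
  have hsplit : ∀ g, f g = (if g ∈ H then f g else 0) + (if g ∈ D then f g else 0) +
      (if g⁻¹ ∈ D then f g else 0) := by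
    intro g
    by_cases hg : g ∈ H
    · simp [hg, ((hH g).1 hg).1, ((hH g).1 hg).2]
    · by_cases hgD : g ∈ D
      · simp [hg, hgD, hinv g hgD]
      · have : g⁻¹ ∈ D := by by_contra h; exact hg ((hH g).2 ⟨hgD, h⟩)
        simp [hg, hgD, this]
  have hinvsum : ∑ g, (if g⁻¹ ∈ D then f g else 0) = ∑ g, (if g ∈ D then f g⁻¹ else 0) :=
    Fintype.sum_equiv (Equiv.inv G) _ _ (fun g => by simp)
  rw [sum_congr rfl fun g _ => hsplit g, sum_add_distrib, sum_add_distrib, hinvsum,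
    sum_ite_mem, sum_ite_mem, univ_inter, sum_add_distrib, add_assoc, ← sum_filter]
  congr 1
  exact sum_subtype _ (by simp) f

theorem IsDRAD.card_eq {D : Finset G} {H : Subgroup G} {l : ℕ} (hD : IsDRAD D H l) :
    Fintype.card G = Nat.card H + 2 * #D := by
  classical
  simpa [mul_comm, sum_add_distrib] using hD.sum_eq (fun _ => (1 : ℕ))

theorem IsDRAD.sq_sum_eq {R : Type*} [CommRing R] [IsDomain R] {D : Finset G} {H : Subgroup G}
    {l : ℕ} (hD : IsDRAD D H l) (χ : G →* R) (hχ : χ.comp H.subtype ≠ 1) :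
    (∑ d ∈ D, χ d) ^ 2 = l - #D := by
  classical
  have hG : ∑ g, χ g = 0 := sum_hom_units_eq_zero χ fun h => hχ (by rw [h]; rfl)
  have hH : ∑ h : H, χ h = 0 := sum_hom_units_eq_zero _ hχ
  have hsum : ∑ d ∈ D, χ d + ∑ d ∈ D, χ d⁻¹ = 0 := by
    simpa [hG, hH, sum_add_distrib] using (hD.sum_eq χ).symm
  have hprod := hD.2.2.sum_mul_sum_inv χ
  rw [hG] at hprod
  linear_combination (∑ d ∈ D, χ d) * hsum - hprod

theorem IsDRAD.card_sub_eq_sq {D : Finset G} {H : Subgroup G} {l n : ℕ} (hD : IsDRAD D H l)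
    (hG : Fintype.card G = 4 * n ^ 2) (hH : Nat.card H = 2 * n) : (#D : ℤ) - l = n ^ 2 := by
  have hcard : (#D : ℤ) = 2 * n ^ 2 - n := by
    have := hD.card_eq
    rw [hG, hH] at this
    zify at this
    linarith
  have hl : ((4 * n ^ 2 - 1) * l : ℤ) = (4 * n ^ 2 - 1) * (n ^ 2 - n) := by
    have := hD.2.2.card_mul_card_s12
    rw [hG, hcard] at this
    push_cast at this
    linear_combination -this
  have hne : (4 * n ^ 2 - 1 : ℤ) ≠ 0 := by
    intro h
    have : (2 * n - 1 : ℤ) * (2 * n + 1) = 0 := by linear_combination h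
    rcases mul_eq_zero.1 this with h1 | h1 <;> omega
  rw [hcard, mul_left_cancel₀ hne hl]
  ring

theorem not_isDRAD_of_monoidHom_mem_adjoin {L : Type*} [Field L] [CharZero L] {n : ℕ}
    (hn : Odd n) {ζ : L} (hζ : IsPrimitiveRoot ζ n) {H : Subgroup G}
    (hG : Fintype.card G = 4 * n ^ 2) (hH : Nat.card H = 2 * n) (χ : G →* L)
    (hχH : χ.comp H.subtype ≠ 1) (hχζ : ∀ g, χ g ∈ ℚ⟮ζ⟯) (D : Finset G) (l : ℕ) :
    ¬ IsDRAD D H l := by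
  intro hD
  have hsq := hD.sq_sum_eq χ hχH
  have hdiff : (l : L) - #D = -(n : L) ^ 2 := by
    have := hD.card_sub_eq_sq hG hH
    exact_mod_cast (by linarith : (l : ℤ) - #D = -(n : ℤ) ^ 2)
  have hn0 : (n : L) ≠ 0 := Nat.cast_ne_zero.2 hn.pos.ne'
  refine hζ.sq_ne_neg_one_of_mem_adjoin hn
    (div_mem (sum_mem (t := D) fun d _ => hχζ d) (_root_.natCast_mem _ n)) ?_
  rw [div_pow, hsq, hdiff]
  field_simp

end DifferenceSets

theorem stmt12 (p : ℕ) (hp : p.Prime) (hp4 : p % 4 = 1)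
    {G : Type*} [Group G] [Fintype G] [DecidableEq G] (x y z : G)
    (hgen : Subgroup.closure ({x, y, z} : Set G) = ⊤)
    (hx : orderOf x = p) (hy : orderOf y = p) (hz : orderOf z = 4)
    (hxy : x * y = y * x)
    (hzx : z⁻¹ * x * z = x) (hzy : z⁻¹ * y * z = y⁻¹)
    (hcard : Fintype.card G = 4 * p ^ 2) :
    ¬ ∃ (D : Finset G) (l : ℕ), IsDRAD D (Subgroup.closure ({x, z ^ 2} : Set G)) l := by
  rintro ⟨D, l, hD⟩
  classical
  have : NeZero p := ⟨hp.ne_zero⟩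
  have hodd : Odd p := hp.odd_of_ne_two (by omega)
  have hxz : Commute x z :=
    show x * z = z * x by simpa [mul_assoc, eq_comm] using congrArg (z * ·) hzx
  have hzy' : z * y = y⁻¹ * z := by
    simpa [mul_assoc, eq_comm] using congrArg (fun g => z * g⁻¹) hzy
  obtain ⟨ψ, hψ⟩ := exists_monoidHom_zmod_apply_eq_ofAdd_one (hx ▸ pow_orderOf_eq_one x)
    (hy ▸ pow_orderOf_eq_one y) (hz ▸ pow_orderOf_eq_one z) hxy hxz hzy' hgen hcard
  obtain ⟨ζ, hζ⟩ : ∃ ζ : ℂ, IsPrimitiveRoot ζ p := ⟨_, Complex.isPrimitiveRoot_exp p hp.ne_zero⟩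
  let χ : G →* ℂ := (AddChar.zmodChar p hζ.pow_eq_one).toMonoidHom.comp ψ
  have hχx : χ x = ζ := by
    simp [χ, hψ, AddChar.zmodChar_apply, ZMod.val_one_eq_one_mod, Nat.mod_eq_of_lt hp.one_lt]
  have hH : Nat.card (Subgroup.closure ({x, z ^ 2} : Set G)) = 2 * p := by
    have hz2 : orderOf (z ^ 2) = 2 := by rw [orderOf_pow' _ two_ne_zero, hz]; rfl
    rw [Subgroup.card_closure_pair_of_coprime (hxz.pow_right 2) (by
      rw [hx, hz2]; exact Nat.coprime_two_right.2 hodd), hx, hz2, mul_comm]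
  refine not_isDRAD_of_monoidHom_mem_adjoin hodd hζ hcard hH χ (fun h => hζ.ne_one hp.one_lt ?_)
    (fun g => pow_mem (mem_adjoin_simple_self ℚ ζ) _) D l hD
  rw [← hχx]
  exact DFunLike.congr_fun h ⟨x, Subgroup.subset_closure (by simp)⟩
end

section
/- Let p be a prime with p ≡ 1 (mod 4) and f² ≡ -1 (mod p), and G = ⟨x,y,z | x^p = y^p = z⁴ = 1, xy = yx, z⁻¹xz = x, z⁻¹yz = y^f⟩. Then G has exactly p involutions, namely y^{-i} z² y^{i} for 0 ≤ i < p, and they generate the normal subgroup ⟨y, z²⟩ of order 2p. -/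
theorem stmt14 (p f : ℕ) (hp : p.Prime) (hp4 : p % 4 = 1)
    (hf : (f : ZMod p) ^ 2 = -1)
    {G : Type*} [Group G] [Fintype G] (x y z : G)
    (hgen : Subgroup.closure ({x, y, z} : Set G) = ⊤)
    (hx : orderOf x = p) (hy : orderOf y = p) (hz : orderOf z = 4)
    (hxy : x * y = y * x)
    (hzx : z⁻¹ * x * z = x) (hzy : z⁻¹ * y * z = y ^ f)
    (hcard : Fintype.card G = 4 * p ^ 2) :
    {g : G | orderOf g = 2} = {g : G | ∃ i : ℕ, i < p ∧ g = (y ^ i)⁻¹ * z ^ 2 * y ^ i} ∧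
      {g : G | orderOf g = 2}.ncard = p ∧
      Subgroup.closure {g : G | orderOf g = 2} = Subgroup.closure ({y, z ^ 2} : Set G) ∧
      (Subgroup.closure ({y, z ^ 2} : Set G)).Normal ∧
      Nat.card (Subgroup.closure ({y, z ^ 2} : Set G)) = 2 * p := by
  haveI : Fact p.Prime := ⟨hp⟩
  haveI : NeZero p := ⟨hp.ne_zero⟩
  haveI : Fact (Nat.Prime 2) := ⟨Nat.prime_two⟩
  have hf4 : (f : ZMod p) ^ 4 = 1 := by
    have : (f : ZMod p) ^ 4 = ((f:ZMod p)^2)^2 := by ring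
    rw [this, hf]; ring
  have hXeq : ∀ {a b : ℕ}, (a : ZMod p) = (b : ZMod p) → x ^ a = x ^ b := fun h =>
    pow_eq_pow_iff_modEq.mpr (by rw [hx]; exact (ZMod.natCast_eq_natCast_iff _ _ _).mp h)
  have hYeq : ∀ {a b : ℕ}, (a : ZMod p) = (b : ZMod p) → y ^ a = y ^ b := fun h =>
    pow_eq_pow_iff_modEq.mpr (by rw [hy]; exact (ZMod.natCast_eq_natCast_iff _ _ _).mp h)
  have hZeq : ∀ {a b : ℕ}, (a : ZMod 4) = (b : ZMod 4) → z ^ a = z ^ b := fun h =>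
    pow_eq_pow_iff_modEq.mpr (by rw [hz]; exact (ZMod.natCast_eq_natCast_iff _ _ _).mp h)
  have hx1 : x ^ p = 1 := by rw [← hx]; exact pow_orderOf_eq_one x
  have hy1 : y ^ p = 1 := by rw [← hy]; exact pow_orderOf_eq_one y
  have hz4 : z ^ 4 = 1 := by rw [← hz]; exact pow_orderOf_eq_one z
  -- x is central
  have hxz : Commute x z := by
    calc x * z = z * (z⁻¹ * x * z) := by group
      _ = z * x := by rw [hzx]
  have hxc : ∀ g : G, Commute x g := by
    intro g
    have hle : Subgroup.closure ({x, y, z} : Set G) ≤ Subgroup.centralizer {x} := by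
      rw [Subgroup.closure_le]
      intro w hw
      rw [SetLike.mem_coe, Subgroup.mem_centralizer_iff]
      intro u hu
      rw [Set.mem_singleton_iff] at hu
      rw [hu]
      rcases hw with h1 | h1 | h1
      · rw [h1]
      · rw [h1]; exact hxy
      · rw [Set.mem_singleton_iff] at h1; rw [h1]; exact hxz
    exact Subgroup.mem_centralizer_iff.mp (hle (hgen ▸ Subgroup.mem_top g)) x rfl
  -- conjugation relations
  have hzy1 : ∀ b : ℕ, z⁻¹ * y ^ b * z = y ^ (b * f) := by
    intro b
    induction b with
    | zero => simp
    | succ n ih =>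
      have h1 : z⁻¹ * y ^ (n + 1) * z = (z⁻¹ * y ^ n * z) * (z⁻¹ * y * z) := by
        rw [pow_succ]; group
      rw [h1, ih, hzy, ← pow_add]
      congr 1
      ring
  have hzyz : ∀ b : ℕ, z * y ^ b = y ^ (b * f ^ 3) * z := by
    intro b
    have h4 : z⁻¹ * y ^ (b * f ^ 3) * z = y ^ b := by
      rw [hzy1]
      exact hYeq (by push_cast; linear_combination (b : ZMod p) * hf4)
    rw [← h4]; group
  have hcomm : ∀ c b : ℕ, z ^ c * y ^ b = y ^ (b * f ^ (3 * c)) * z ^ c := by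
    intro c
    induction c with
    | zero => intro b; simp
    | succ n ih =>
      intro b
      calc z ^ (n + 1) * y ^ b = z ^ n * (z * y ^ b) := by rw [pow_succ]; group
        _ = z ^ n * (y ^ (b * f ^ 3) * z) := by rw [hzyz]
        _ = (z ^ n * y ^ (b * f ^ 3)) * z := by group
        _ = y ^ (b * f ^ 3 * f ^ (3 * n)) * z ^ n * z := by rw [ih]
        _ = y ^ (b * f ^ (3 * (n + 1))) * z ^ (n + 1) := by
            rw [show b * f ^ 3 * f ^ (3 * n) = b * f ^ (3 * (n + 1)) by ring,
              mul_assoc, ← pow_succ]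
  -- multiplication rule
  have hmul : ∀ a b c a' b' c' : ℕ, (x ^ a * y ^ b * z ^ c) * (x ^ a' * y ^ b' * z ^ c') =
      x ^ (a + a') * y ^ (b + b' * f ^ (3 * c)) * z ^ (c + c') := by
    intro a b c a' b' c'
    have h1 : Commute (y ^ b) (x ^ a') := ((hxc y).symm.pow_pow b a')
    have h2 : Commute (z ^ c) (x ^ a') := ((hxc z).symm.pow_pow c a')
    calc x ^ a * y ^ b * z ^ c * (x ^ a' * y ^ b' * z ^ c')
        = x ^ a * (y ^ b * (z ^ c * (x ^ a' * (y ^ b' * z ^ c')))) := by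
          simp only [mul_assoc]
      _ = x ^ a * (y ^ b * (x ^ a' * (z ^ c * (y ^ b' * z ^ c')))) := by
          rw [← mul_assoc (z ^ c) (x ^ a'), h2.eq, mul_assoc]
      _ = x ^ a * (x ^ a' * (y ^ b * (z ^ c * (y ^ b' * z ^ c')))) := by
          rw [← mul_assoc (y ^ b) (x ^ a'), h1.eq, mul_assoc]
      _ = x ^ a * (x ^ a' * (y ^ b * (y ^ (b' * f ^ (3 * c)) * (z ^ c * z ^ c')))) := by
          rw [← mul_assoc (z ^ c) (y ^ b'), hcomm c b', mul_assoc]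
      _ = x ^ (a + a') * y ^ (b + b' * f ^ (3 * c)) * z ^ (c + c') := by
          simp only [pow_add, mul_assoc]
  -- the (p-1) arithmetic helper
  have hsub : ∀ a : ℕ, a + (p - 1) * a = p * a := by
    intro a
    have h1 : (p - 1) * a = p * a - a := Nat.sub_one_mul p a
    have h2 : a ≤ p * a := Nat.le_mul_of_pos_left a hp.pos
    omega
  have hpm1 : ((p - 1 : ℕ) : ZMod p) = -1 := by
    rw [Nat.cast_sub hp.one_lt.le]
    simp
  -- every element has the normal form x^a y^b z^c
  have hSgp : ∀ g : G, ∃ a b c : ℕ, g = x ^ a * y ^ b * z ^ c := by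
    intro g
    let S : Subgroup G :=
      { carrier := {g : G | ∃ a b c : ℕ, g = x ^ a * y ^ b * z ^ c}
        one_mem' := ⟨0, 0, 0, by simp⟩
        mul_mem' := by
          rintro g h ⟨a, b, c, rfl⟩ ⟨a', b', c', rfl⟩
          exact ⟨a + a', b + b' * f ^ (3 * c), c + c', hmul a b c a' b' c'⟩
        inv_mem' := by
          rintro g ⟨a, b, c, rfl⟩
          refine ⟨(p - 1) * a, (p - 1) * (b * f ^ (12 * c)) * f ^ (9 * c), 3 * c, ?_⟩
          apply inv_eq_of_mul_eq_one_right
          rw [hmul]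
          have ex : x ^ (a + (p - 1) * a) = 1 := by
            rw [hsub, pow_mul, hx1, one_pow]
          have ez : z ^ (c + 3 * c) = 1 := by
            rw [show c + 3 * c = 4 * c by ring, pow_mul, hz4, one_pow]
          have ey : y ^ (b + (p - 1) * (b * f ^ (12 * c)) * f ^ (9 * c) * f ^ (3 * c)) = 1 := by
            have : ((b + (p - 1) * (b * f ^ (12 * c)) * f ^ (9 * c) * f ^ (3 * c) : ℕ) : ZMod p)
                = ((0 : ℕ) : ZMod p) := by
              push_cast
              rw [hpm1]
              have e12 : (f : ZMod p) ^ (12 * c) = 1 := by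
                rw [show 12 * c = 4 * (3 * c) by ring, pow_mul, hf4, one_pow]
              have e9 : (f : ZMod p) ^ (9 * c) * (f : ZMod p) ^ (3 * c) = 1 := by
                rw [← pow_add, show 9 * c + 3 * c = 4 * (3 * c) by ring, pow_mul, hf4, one_pow]
              calc (b : ZMod p) + -1 * ((b : ZMod p) * (f : ZMod p) ^ (12 * c)) *
                    ((f : ZMod p) ^ (9 * c)) * ((f : ZMod p) ^ (3 * c))
                  = (b : ZMod p) + -1 * ((b : ZMod p) * (f : ZMod p) ^ (12 * c)) *
                    ((f : ZMod p) ^ (9 * c) * (f : ZMod p) ^ (3 * c)) := by ring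
                _ = 0 := by rw [e12, e9]; ring
            rw [hYeq this, pow_zero]
          rw [ex, ey, ez]
          simp }
    have hle : Subgroup.closure ({x, y, z} : Set G) ≤ S := by
      rw [Subgroup.closure_le]
      rintro w hw
      rcases hw with h1 | h1 | h1
      · exact ⟨1, 0, 0, by simp [h1]⟩
      · exact ⟨0, 1, 0, by simp [h1]⟩
      · rw [Set.mem_singleton_iff] at h1; exact ⟨0, 0, 1, by simp [h1]⟩
    exact hle (hgen ▸ Subgroup.mem_top g)
  -- cast-of-val helpers
  have hvalp : ∀ a : ℕ, (((a : ZMod p).val : ℕ) : ZMod p) = (a : ZMod p) := by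
    intro a
    rw [ZMod.val_natCast]
    exact (ZMod.natCast_eq_natCast_iff _ _ _).mpr (Nat.mod_modEq a p)
  have hval4 : ∀ c : ℕ, (((c : ZMod 4).val : ℕ) : ZMod 4) = (c : ZMod 4) := by
    intro c
    rw [ZMod.val_natCast]
    exact (ZMod.natCast_eq_natCast_iff _ _ _).mpr (Nat.mod_modEq c 4)
  -- injectivity of the normal form
  have hinj : ∀ a b c a' b' c' : ℕ, x ^ a * y ^ b * z ^ c = x ^ a' * y ^ b' * z ^ c' →
      (a : ZMod p) = (a' : ZMod p) ∧ (b : ZMod p) = (b' : ZMod p) ∧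
        (c : ZMod 4) = (c' : ZMod 4) := by
    set φ : ZMod p × ZMod p × ZMod 4 → G :=
      fun t => x ^ t.1.val * y ^ t.2.1.val * z ^ t.2.2.val with hφ
    have hφeq : ∀ a b c : ℕ, φ (↑a, ↑b, ↑c) = x ^ a * y ^ b * z ^ c := by
      intro a b c
      simp only [hφ]
      rw [hXeq (hvalp a), hYeq (hvalp b), hZeq (hval4 c)]
    have hsurj : Function.Surjective φ := by
      intro g
      obtain ⟨a, b, c, rfl⟩ := hSgp g
      exact ⟨(↑a, ↑b, ↑c), hφeq a b c⟩
    have hbij : Function.Bijective φ := by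
      rw [Fintype.bijective_iff_surjective_and_card]
      refine ⟨hsurj, ?_⟩
      rw [hcard]
      simp [ZMod.card]
      ring
    intro a b c a' b' c' h
    have h2 : φ (↑a, ↑b, ↑c) = φ (↑a', ↑b', ↑c') := by rw [hφeq, hφeq]; exact h
    have h3 := hbij.1 h2
    simp only [Prod.mk.injEq] at h3
    exact ⟨h3.1, h3.2.1, h3.2.2⟩
  -- small arithmetic facts
  have hp2 : p % 2 = 1 := by omega
  have h2ne : (2 : ZMod p) ≠ 0 := by
    intro h
    have h' : ((2 : ℕ) : ZMod p) = 0 := by push_cast; exact h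
    have := (ZMod.natCast_eq_zero_iff 2 p).mp h'
    have := (Nat.prime_dvd_prime_iff_eq hp Nat.prime_two).mp this
    omega
  have hz2sq : z ^ 2 * z ^ 2 = 1 := by rw [← pow_add]; exact hz4
  have hz2ne : z ^ 2 ≠ 1 := by
    intro h
    have : orderOf z ∣ 2 := orderOf_dvd_of_pow_eq_one h
    rw [hz] at this
    omega
  have hordz2 : orderOf (z ^ 2) = 2 := by
    apply orderOf_eq_prime
    · rw [sq]; exact hz2sq
    · exact hz2ne
  have hf6 : (f : ZMod p) ^ 6 = -1 := by
    calc (f : ZMod p) ^ 6 = (f : ZMod p) ^ 4 * (f : ZMod p) ^ 2 := by ring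
      _ = -1 := by rw [hf4, hf]; ring
  have tri : ∀ b c : ℕ, y ^ b * z ^ c = x ^ 0 * y ^ b * z ^ c := by
    intro b c; rw [pow_zero, one_mul]
  have hone : (1 : G) = x ^ 0 * y ^ 0 * z ^ 0 := by simp
  -- the involutions
  have hinv2 : ∀ b : ℕ, orderOf (y ^ b * z ^ 2) = 2 := by
    intro b
    apply orderOf_eq_prime
    · have : (y ^ b * z ^ 2) ^ 2 = (y ^ b * z ^ 2) * (y ^ b * z ^ 2) := sq _
      rw [this, tri b 2, hmul 0 b 2 0 b 2]
      have ey : y ^ (b + b * f ^ (3 * 2)) = 1 := by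
        have : ((b + b * f ^ (3 * 2) : ℕ) : ZMod p) = ((0 : ℕ) : ZMod p) := by
          push_cast
          rw [hf6]
          ring
        rw [hYeq this, pow_zero]
      rw [ey]
      simp [show (2 : ℕ) + 2 = 4 by rfl, hz4]
    · intro h
      rw [tri b 2, hone] at h
      obtain ⟨-, -, hc⟩ := hinj 0 b 2 0 0 0 h
      exact absurd hc (by decide)
  -- characterization of involutions
  have hset : {g : G | orderOf g = 2} = {g : G | ∃ b : ℕ, b < p ∧ g = y ^ b * z ^ 2} := by
    ext g
    simp only [Set.mem_setOf_eq]
    constructor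
    · intro hg
      have hg2 : g ^ 2 = 1 := by rw [← hg]; exact pow_orderOf_eq_one g
      obtain ⟨a, b, c, rfl⟩ := hSgp g
      -- reduce exponents
      obtain ⟨A, B, C, hABC, hA, hB, hC⟩ : ∃ A B C : ℕ,
          x ^ a * y ^ b * z ^ c = x ^ A * y ^ B * z ^ C ∧ A < p ∧ B < p ∧ C < 4 := by
        refine ⟨a % p, b % p, c % 4, ?_, Nat.mod_lt _ hp.pos, Nat.mod_lt _ hp.pos,
          Nat.mod_lt _ (by norm_num)⟩
        rw [hXeq ((ZMod.natCast_eq_natCast_iff _ _ _).mpr (Nat.mod_modEq a p).symm),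
          hYeq ((ZMod.natCast_eq_natCast_iff _ _ _).mpr (Nat.mod_modEq b p).symm),
          hZeq ((ZMod.natCast_eq_natCast_iff _ _ _).mpr (Nat.mod_modEq c 4).symm)]
      rw [hABC] at hg2 hg ⊢
      rw [sq, hmul A B C A B C, hone] at hg2
      obtain ⟨ha0, hb0, hc0⟩ := hinj _ _ _ _ _ _ hg2
      push_cast at ha0 hb0 hc0
      -- A = 0
      have hA0 : (A : ZMod p) = 0 := by
        have h2a : (2 : ZMod p) * (A : ZMod p) = 0 := by linear_combination ha0
        rcases mul_eq_zero.mp h2a with h | h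
        · exact absurd h h2ne
        · exact h
      have hxA : x ^ A = 1 := by rw [hXeq (hA0.trans (by push_cast; rfl) :
          (A : ZMod p) = ((0 : ℕ) : ZMod p)), pow_zero]
      -- C = 0 or C = 2
      have hC02 : C = 0 ∨ C = 2 := by
        interval_cases C
        · exact Or.inl rfl
        · exfalso; revert hc0; decide
        · exact Or.inr rfl
        · exfalso; revert hc0; decide
      rcases hC02 with rfl | rfl
      · -- C = 0 : g = y^B has odd order, contradiction
        exfalso
        simp only [hxA, pow_zero, one_mul, mul_one] at hg
        have : (2 : ℕ) ∣ p := by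
          rw [← hg]
          exact orderOf_dvd_of_pow_eq_one (by rw [← pow_mul, mul_comm _ p, pow_mul, hy1, one_pow] :
            (y ^ B) ^ p = 1)
        omega
      · exact ⟨B, hB, by rw [hxA, one_mul]⟩
    · rintro ⟨b, hb, rfl⟩
      exact hinv2 b
  have hvv : ∀ e : ZMod p, ((e.val : ℕ) : ZMod p) = e := fun e => by
    rw [ZMod.natCast_val, ZMod.cast_id]
  -- conjugate form
  have hconj2 : ∀ i b : ℕ, ((2 * i + b : ℕ) : ZMod p) = 0 →
      (y ^ i)⁻¹ * z ^ 2 * y ^ i = y ^ b * z ^ 2 := by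
    intro i b hcond
    push_cast at hcond
    have h1 : y ^ (i * f ^ (3 * 2)) = y ^ (i + b) := by
      apply hYeq
      push_cast
      rw [hf6]
      linear_combination -hcond
    calc (y ^ i)⁻¹ * z ^ 2 * y ^ i = (y ^ i)⁻¹ * (z ^ 2 * y ^ i) := by rw [mul_assoc]
      _ = (y ^ i)⁻¹ * (y ^ (i * f ^ (3 * 2)) * z ^ 2) := by rw [hcomm 2 i]
      _ = (y ^ i)⁻¹ * (y ^ (i + b) * z ^ 2) := by rw [h1]
      _ = (y ^ i)⁻¹ * (y ^ i * (y ^ b * z ^ 2)) := by rw [pow_add, mul_assoc]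
      _ = y ^ b * z ^ 2 := by rw [inv_mul_cancel_left]
  have hconjset : {g : G | ∃ b : ℕ, b < p ∧ g = y ^ b * z ^ 2} =
      {g : G | ∃ i : ℕ, i < p ∧ g = (y ^ i)⁻¹ * z ^ 2 * y ^ i} := by
    ext g
    simp only [Set.mem_setOf_eq]
    constructor
    · rintro ⟨b, hb, rfl⟩
      refine ⟨(-(b : ZMod p) * (2 : ZMod p)⁻¹).val, ZMod.val_lt _, ?_⟩
      refine (hconj2 _ b ?_).symm
      push_cast
      rw [hvv]
      rw [mul_comm (2 : ZMod p) _, mul_assoc, inv_mul_cancel₀ h2ne, mul_one]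
      ring
    · rintro ⟨i, hi, rfl⟩
      refine ⟨((-2 : ZMod p) * (i : ZMod p)).val, ZMod.val_lt _, hconj2 i _ ?_⟩
      push_cast
      rw [hvv]
      ring
  -- ncard
  have hncard : {g : G | orderOf g = 2}.ncard = p := by
    have hinjf : Function.Injective (fun b : Fin p => y ^ (b : ℕ) * z ^ 2) := by
      intro b b' h
      simp only at h
      rw [tri, tri] at h
      obtain ⟨-, hb, -⟩ := hinj _ _ _ _ _ _ h
      have hmod := (ZMod.natCast_eq_natCast_iff _ _ _).mp hb
      rw [Nat.ModEq, Nat.mod_eq_of_lt b.isLt, Nat.mod_eq_of_lt b'.isLt] at hmod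
      exact Fin.ext hmod
    have himg : {g : G | ∃ b : ℕ, b < p ∧ g = y ^ b * z ^ 2} =
        (fun b : Fin p => y ^ (b : ℕ) * z ^ 2) '' Set.univ := by
      ext g
      simp only [Set.image_univ, Set.mem_range, Set.mem_setOf_eq]
      constructor
      · rintro ⟨b, hb, rfl⟩; exact ⟨⟨b, hb⟩, rfl⟩
      · rintro ⟨⟨b, hb⟩, rfl⟩; exact ⟨b, hb, rfl⟩
    rw [hset, himg, Set.ncard_image_of_injective _ hinjf, Set.ncard_univ,
      Nat.card_eq_fintype_card, Fintype.card_fin]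
  -- closure equality
  have hcl : Subgroup.closure {g : G | orderOf g = 2} =
      Subgroup.closure ({y, z ^ 2} : Set G) := by
    apply le_antisymm
    · rw [Subgroup.closure_le]
      intro g hg
      rw [hset] at hg
      obtain ⟨b, hb, rfl⟩ := hg
      exact SetLike.mem_coe.mpr (mul_mem
        (pow_mem (Subgroup.subset_closure (Set.mem_insert _ _)) b)
        (Subgroup.subset_closure (Set.mem_insert_of_mem _ rfl)))
    · rw [Subgroup.closure_le]
      intro g hg
      have hy2 : y * z ^ 2 ∈ {g : G | orderOf g = 2} := by
        have := hinv2 1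
        simpa using this
      have hz2m : z ^ 2 ∈ {g : G | orderOf g = 2} := hordz2
      rcases hg with h1 | h1
      · have hyd : y = (y * z ^ 2) * z ^ 2 := by rw [mul_assoc, hz2sq, mul_one]
        rw [SetLike.mem_coe, h1, hyd]
        exact mul_mem (Subgroup.subset_closure hy2) (Subgroup.subset_closure hz2m)
      · rw [Set.mem_singleton_iff] at h1
        rw [SetLike.mem_coe, h1]
        exact Subgroup.subset_closure hz2m
  -- normality
  have horderconj : ∀ (g h : G), orderOf (g * h * g⁻¹) = orderOf h := by
    intro g h
    have := orderOf_injective (MulAut.conj g).toMonoidHom (MulEquiv.injective _) h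
    simpa using this
  have hnormal : (Subgroup.closure {g : G | orderOf g = 2}).Normal := by
    constructor
    intro n hn g
    have himg : ⇑(MulAut.conj g).toMonoidHom '' {h : G | orderOf h = 2} =
        {h : G | orderOf h = 2} := by
      ext a
      simp only [Set.mem_image, Set.mem_setOf_eq]
      constructor
      · rintro ⟨h, hh, rfl⟩
        have : (MulAut.conj g).toMonoidHom h = g * h * g⁻¹ := rfl
        rw [this, horderconj]
        exact hh
      · intro ha
        refine ⟨g⁻¹ * a * g, ?_, ?_⟩
        · have := horderconj g⁻¹ a
          rw [inv_inv] at this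
          rw [this]
          exact ha
        · show g * (g⁻¹ * a * g) * g⁻¹ = a
          group
    have hmem : g * n * g⁻¹ ∈ Subgroup.map (MulAut.conj g).toMonoidHom
        (Subgroup.closure {h : G | orderOf h = 2}) := ⟨n, hn, rfl⟩
    rw [MonoidHom.map_closure, himg] at hmem
    exact hmem
  -- the subgroup K = {y^b z^(2c)}
  let K : Subgroup G :=
    { carrier := {g : G | ∃ b c : ℕ, g = y ^ b * z ^ (2 * c)}
      one_mem' := ⟨0, 0, by simp⟩
      mul_mem' := by
        rintro g h ⟨b, c, rfl⟩ ⟨b', c', rfl⟩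
        refine ⟨b + b' * f ^ (3 * (2 * c)), c + c', ?_⟩
        calc y ^ b * z ^ (2 * c) * (y ^ b' * z ^ (2 * c'))
            = x ^ 0 * y ^ b * z ^ (2 * c) * (x ^ 0 * y ^ b' * z ^ (2 * c')) := by
              rw [← tri, ← tri]
          _ = x ^ (0 + 0) * y ^ (b + b' * f ^ (3 * (2 * c))) * z ^ (2 * c + 2 * c') :=
              hmul 0 b (2 * c) 0 b' (2 * c')
          _ = y ^ (b + b' * f ^ (3 * (2 * c))) * z ^ (2 * (c + c')) := by
              rw [show 2 * c + 2 * c' = 2 * (c + c') by ring]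
              norm_num
      inv_mem' := by
        rintro g ⟨b, c, rfl⟩
        refine ⟨(p - 1) * (b * f ^ (6 * c)), c, ?_⟩
        apply inv_eq_of_mul_eq_one_right
        rw [tri, tri, hmul 0 b (2 * c) 0 _ (2 * c)]
        have ey : y ^ (b + (p - 1) * (b * f ^ (6 * c)) * f ^ (3 * (2 * c))) = 1 := by
          have : ((b + (p - 1) * (b * f ^ (6 * c)) * f ^ (3 * (2 * c)) : ℕ) : ZMod p)
              = ((0 : ℕ) : ZMod p) := by
            push_cast
            rw [hpm1]
            have e12 : (f : ZMod p) ^ (6 * c) * (f : ZMod p) ^ (3 * (2 * c)) = 1 := by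
              rw [← pow_add, show 6 * c + 3 * (2 * c) = 4 * (3 * c) by ring, pow_mul, hf4,
                one_pow]
            calc (b : ZMod p) + -1 * ((b : ZMod p) * (f : ZMod p) ^ (6 * c)) *
                  (f : ZMod p) ^ (3 * (2 * c))
                = (b : ZMod p) + -1 * (b : ZMod p) *
                  ((f : ZMod p) ^ (6 * c) * (f : ZMod p) ^ (3 * (2 * c))) := by ring
              _ = 0 := by rw [e12]; ring
          rw [hYeq this, pow_zero]
        have ez : z ^ (2 * c + 2 * c) = 1 := by
          rw [show 2 * c + 2 * c = 4 * c by ring, pow_mul, hz4, one_pow]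
        rw [ey, ez]
        simp }
  have hHK : Subgroup.closure ({y, z ^ 2} : Set G) = K := by
    apply le_antisymm
    · rw [Subgroup.closure_le]
      rintro g hg
      rcases hg with h1 | h1
      · exact ⟨1, 0, by simp [h1]⟩
      · rw [Set.mem_singleton_iff] at h1
        exact ⟨0, 1, by simp [h1]⟩
    · intro g hg
      obtain ⟨b, c, rfl⟩ := hg
      have hyc : y ∈ Subgroup.closure ({y, z ^ 2} : Set G) :=
        Subgroup.subset_closure (Set.mem_insert _ _)
      have hzc : z ^ 2 ∈ Subgroup.closure ({y, z ^ 2} : Set G) :=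
        Subgroup.subset_closure (Set.mem_insert_of_mem _ rfl)
      have h1 : y ^ b * z ^ (2 * c) = y ^ b * (z ^ 2) ^ c := by rw [pow_mul]
      rw [h1]
      exact mul_mem (pow_mem hyc b) (pow_mem hzc c)
  -- counting K
  have hcardK : Nat.card (Subgroup.closure ({y, z ^ 2} : Set G)) = 2 * p := by
    set m : ZMod p × ZMod 2 → G := fun t => y ^ t.1.val * z ^ (2 * t.2.val) with hm
    have hrange : (K : Set G) = Set.range m := by
      ext g
      constructor
      · rintro ⟨b, c, rfl⟩
        refine ⟨((b : ZMod p), (c : ZMod 2)), ?_⟩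
        show y ^ (b : ZMod p).val * z ^ (2 * (c : ZMod 2).val) = y ^ b * z ^ (2 * c)
        rw [ZMod.val_natCast, ZMod.val_natCast,
          hYeq ((ZMod.natCast_eq_natCast_iff _ _ _).mpr (Nat.mod_modEq b p)),
          hZeq ((ZMod.natCast_eq_natCast_iff _ _ _).mpr
            (Nat.ModEq.mul_left' (c := 2) (Nat.mod_modEq c 2)))]
      · rintro ⟨⟨b, c⟩, rfl⟩
        exact ⟨b.val, c.val, rfl⟩
    have hminj : Function.Injective m := by
      rintro ⟨b, c⟩ ⟨b', c'⟩ h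
      have h' : y ^ b.val * z ^ (2 * c.val) = y ^ b'.val * z ^ (2 * c'.val) := h
      rw [tri, tri] at h'
      obtain ⟨-, h1, h2⟩ := hinj _ _ _ _ _ _ h'
      have hb : b = b' := by
        have hmod := (ZMod.natCast_eq_natCast_iff _ _ _).mp h1
        rw [Nat.ModEq, Nat.mod_eq_of_lt (ZMod.val_lt b), Nat.mod_eq_of_lt (ZMod.val_lt b')]
          at hmod
        exact ZMod.val_injective _ hmod
      have hc : c = c' := by
        have hmod := (ZMod.natCast_eq_natCast_iff _ _ _).mp h2
        have hcv : c.val < 2 := ZMod.val_lt c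
        have hcv' : c'.val < 2 := ZMod.val_lt c'
        rw [Nat.ModEq, Nat.mod_eq_of_lt (by omega), Nat.mod_eq_of_lt (by omega)] at hmod
        exact ZMod.val_injective _ (by omega)
      rw [hb, hc]
    rw [hHK]
    have e1 : Nat.card K = Nat.card (Set.range m) := Nat.card_congr (Equiv.setCongr hrange)
    rw [e1, Nat.card_range_of_injective hminj, Nat.card_prod, Nat.card_zmod, Nat.card_zmod]
    ring
  exact ⟨hset.trans hconjset, hncard, hcl, hcl ▸ hnormal, hcardK⟩
end

section
/- Let G be a finite group with a DRAD difference set D and subgroup H containing a subgroup Y = ⟨y⟩ of odd order p, with ε: G → 𝔽₂ the indicator function of D reduced mod 2, and Σ_Y(g) := Σ_{i=0}^{p-1} ε(y^i g) ∈ 𝔽₂. Then: (i) for g ∉ H, Σ_Y(g) + Σ_Y(g⁻¹) = 1; (ii) for g ∈ H, Σ_Y(g) = 0; (iii) for all g ∈ G, Σ_Y(g)·Σ_Y(g⁻¹) = 0. -/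
/-- `Σ_Y(g) = Σ_{i=0}^{p-1} ε(yⁱ g) ∈ 𝔽₂`, where `ε` is the mod-2 indicator of `D`. -/
def SigY {G : Type*} [Group G] [DecidableEq G] (D : Finset G) (y : G) (p : ℕ) (g : G) :
    ZMod 2 :=
  ∑ i ∈ Finset.range p, if y ^ i * g ∈ D then 1 else 0

/-- The finset of powers of `y`. -/
def Yf {G : Type*} [Group G] [DecidableEq G] (y : G) (p : ℕ) : Finset G :=
  (Finset.range p).image (y ^ ·)

lemma mem_Yf {G : Type*} [Group G] [Fintype G] [DecidableEq G] {y : G} {p : ℕ}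
    (hyo : orderOf y = p) {h : G} : h ∈ Yf y p ↔ h ∈ Subgroup.zpowers y := by
  rw [mem_zpowers_iff_mem_range_orderOf, hyo, Yf]

lemma card_Yf {G : Type*} [Group G] [Fintype G] [DecidableEq G] {y : G} {p : ℕ}
    (hyo : orderOf y = p) : (Yf y p).card = p := by
  rw [Yf, Finset.card_image_of_injOn, Finset.card_range]
  intro a ha b hb hab
  exact pow_injOn_Iio_orderOf (by simpa [hyo] using Finset.mem_range.mp ha)
    (by simpa [hyo] using Finset.mem_range.mp hb) hab

lemma sigY_eq_sum {G : Type*} [Group G] [Fintype G] [DecidableEq G]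
    (D : Finset G) (p : ℕ) (y : G) (hyo : orderOf y = p) (g : G) :
    SigY D y p g = ∑ h ∈ Yf y p, (if h * g ∈ D then (1 : ZMod 2) else 0) := by
  unfold SigY Yf
  rw [Finset.sum_image]
  intro a ha b hb hab
  exact pow_injOn_Iio_orderOf (by simpa [hyo] using Finset.mem_range.mp ha)
    (by simpa [hyo] using Finset.mem_range.mp hb) hab

lemma sum_inv_conj {G : Type*} [Group G] [Fintype G] [DecidableEq G]
    (D : Finset G) (y : G) (p : ℕ) (hyo : orderOf y = p)
    (hY : (Subgroup.zpowers y).Normal) (g : G) :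
    (∑ h ∈ Yf y p, (if h * g⁻¹ ∈ D then (1 : ZMod 2) else 0))
      = ∑ h ∈ Yf y p, (if (h * g)⁻¹ ∈ D then (1 : ZMod 2) else 0) := by
  apply Finset.sum_nbij' (i := fun h => g * h⁻¹ * g⁻¹) (j := fun h => g⁻¹ * h⁻¹ * g)
  · intro h hh
    rw [mem_Yf hyo] at *
    exact hY.conj_mem _ (inv_mem hh) g
  · intro h hh
    rw [mem_Yf hyo] at *
    simpa using hY.conj_mem _ (inv_mem hh) g⁻¹
  · intro h _; group
  · intro h _; group
  · intro h _
    have : (g * h⁻¹ * g⁻¹ * g)⁻¹ = h * g⁻¹ := by group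
    rw [this]

theorem stmt17 {G : Type*} [Group G] [Fintype G] [DecidableEq G]
    (H : Subgroup G) [H.Normal] (hH : H ≠ ⊥)
    (D : Finset G) (l : ℕ) (hD : IsDRAD D H l)
    (p : ℕ) (hpodd : Odd p) (y : G) (hyH : y ∈ H) (hyo : orderOf y = p)
    (hY : (Subgroup.zpowers y).Normal) :
    (∀ g : G, g ∉ H → SigY D y p g + SigY D y p g⁻¹ = 1) ∧
      (∀ g ∈ H, SigY D y p g = 0) ∧
      (∀ g : G, SigY D y p g * SigY D y p g⁻¹ = 0) := by
  obtain ⟨hD1, hD2, _⟩ := hD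
  have hzH : ∀ h ∈ Subgroup.zpowers y, h ∈ H := fun h hh => by
    obtain ⟨k, rfl⟩ := hh; exact zpow_mem hyH k
  have part1 : ∀ g : G, g ∉ H → SigY D y p g + SigY D y p g⁻¹ = 1 := by
    intro g hg
    rw [sigY_eq_sum D p y hyo, sigY_eq_sum D p y hyo, sum_inv_conj D y p hyo hY,
      ← Finset.sum_add_distrib]
    have : ∀ h ∈ Yf y p,
        ((if h * g ∈ D then (1 : ZMod 2) else 0)
          + if (h * g)⁻¹ ∈ D then (1 : ZMod 2) else 0) = 1 := by
      intro h hh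
      rw [mem_Yf hyo] at hh
      have hgnH : h * g ∉ H := fun hm => hg (by
        have := mul_mem (inv_mem (hzH h hh)) hm; simpa using this)
      have hdd := (hD2 (h * g)).not.mp hgnH
      push_neg at hdd
      by_cases hd : h * g ∈ D
      · rw [if_pos hd, if_neg (hD1 _ hd), add_zero]
      · rw [if_neg hd, if_pos (hdd hd), zero_add]
    rw [Finset.sum_congr rfl this, Finset.sum_const, nsmul_eq_mul, mul_one, card_Yf hyo]
    have h2 : p % 2 = 1 := Nat.odd_iff.mp hpodd
    conv_lhs => rw [← Nat.mod_add_div p 2, h2]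
    push_cast
    rw [show (2 : ZMod 2) = 0 by decide]
    simp
  have part2 : ∀ g ∈ H, SigY D y p g = 0 := by
    intro g hg
    rw [sigY_eq_sum D p y hyo]
    apply Finset.sum_eq_zero
    intro h hh
    rw [mem_Yf hyo] at hh
    have : h * g ∈ H := mul_mem (hzH h hh) hg
    simp [((hD2 _).mp this).1]
  refine ⟨part1, part2, fun g => ?_⟩
  by_cases hg : g ∈ H
  · rw [part2 g hg, zero_mul]
  · have := part1 g hg
    revert this
    generalize SigY D y p g = a
    generalize SigY D y p g⁻¹ = b
    revert a b; decide
end
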